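/- arXiv:1712.06105 — 12 statements merged into one kernel-verified Lean document; each statement's English description precedes it below -/
import Mathlib

section
/- Suppose ad > bc, Δ_Δ ≥ 0, and at least one of the two numbers (2 − a)x_Δ^+ − b and (2 − a)x_Δ^− − b is positive. Then there exists N such that for every n > N the polynomial W_n has at least one real root. -/
/-!
Every `W n` with `n ≥ 2` is positive at `0`, so it suffices to find a negative value on `z < 0`.

For odd `n` take the zero `z₀ = -d/c` of the second coefficient: there the recurrence
degenerates to `W (n + 1) (z₀) = (a z₀ + b) W n (z₀)` with `a z₀ + b < 0` (as `ad > bc`),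
so `W n (z₀) < 0` for odd `n`.

For even `n` one evaluates at a root `x` of `Δ`, where the characteristic equation
`λ² = (a x + b) λ + (c x + d)` has the double root `t = (a x + b)/2`. Then
`t W n (x) = (t + (x - t) n) tⁿ`, and the hypothesis `(2 - a) x - b > 0` says exactly `t < x`;
since also `x < 0`, the right-hand side is eventually positive for even `n`, so `W n (x) < 0`.
-/

open Polynomial Filter

section TwoStepRecurrence

variable {p q : ℝ} {u v : ℕ → ℝ}

theorem eq_of_twoStep_recurrence (hu : ∀ n, u (n + 2) = p * u (n + 1) + q * u n)
    (hv : ∀ n, v (n + 2) = p * v (n + 1) + q * v n) (h0 : u 0 = v 0) (h1 : u 1 = v 1) :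
    u = v := by
  funext n
  induction n using Nat.twoStepInduction with
  | zero => exact h0
  | one => exact h1
  | more n ihn ihn1 => rw [hu, hv, ihn, ihn1]

theorem pos_of_twoStep_recurrence (hp : 0 < p) (hq : 0 < q)
    (hu : ∀ n, u (n + 2) = p * u (n + 1) + q * u n) (h0 : 0 < u 0) (h1 : 0 ≤ u 1) (n : ℕ) :
    0 < u (n + 2) := by
  have key : ∀ n, 0 ≤ u (n + 1) ∧ 0 < u (n + 2) := by
    intro n
    induction n with
    | zero => exact ⟨h1, by rw [hu]; positivity⟩
    | succ k ih =>
      obtain ⟨hk1, hk2⟩ := ih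
      exact ⟨hk2.le, by rw [hu]; positivity⟩
  exact (key n).2

theorem twoStep_recurrence_of_repeated_root (t α β : ℝ) (n : ℕ) :
    (α + β * ↑(n + 2)) * t ^ (n + 2) =
      2 * t * ((α + β * ↑(n + 1)) * t ^ (n + 1)) + -t ^ 2 * ((α + β * n) * t ^ n) := by
  push_cast
  ring

end TwoStepRecurrence

theorem exists_isRoot_of_eval_neg_of_eval_pos {P : ℝ[X]} {x y : ℝ} (hxy : x ≤ y)
    (hx : P.eval x < 0) (hy : 0 < P.eval y) : ∃ z, P.IsRoot z := by
  obtain ⟨z, -, hz⟩ := intermediate_value_Icc hxy P.continuous.continuousOn ⟨hx.le, hy.le⟩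
  exact ⟨z, hz⟩

theorem quadratic_eq_zero_of_root_formula {a b c d s x : ℝ} (ha : a ≠ 0)
    (hs : s ^ 2 = -a ^ 2 * d + a * b * c + c ^ 2) (hx : x = (-(a * b) - 2 * c + 2 * s) / a ^ 2) :
    a ^ 2 * x ^ 2 + (2 * a * b + 4 * c) * x + (b ^ 2 + 4 * d) = 0 := by
  subst hx
  field_simp
  linear_combination 4 * hs

theorem neg_of_quadratic_eq_zero {a b c d x : ℝ} (hc : 0 < c) (hd : 0 < d)
    (hΔ : a ^ 2 * x ^ 2 + (2 * a * b + 4 * c) * x + (b ^ 2 + 4 * d) = 0) : x < 0 := by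
  nlinarith [sq_nonneg (a * x + b)]

section Recurrence

variable {a b c d : ℝ} {W : ℕ → ℝ[X]}

theorem eval_add_two_of_recurrence
    (hW : ∀ n, W (n + 2) = (C a * X + C b) * W (n + 1) + (C c * X + C d) * W n) (z : ℝ)
    (n : ℕ) :
    (W (n + 2)).eval z = (a * z + b) * (W (n + 1)).eval z + (c * z + d) * (W n).eval z := by
  simp [hW]

theorem eval_zero_pos_of_recurrence (hb : 0 < b) (hd : 0 < d) (hW0 : W 0 = 1) (hW1 : W 1 = X)
    (hW : ∀ n, W (n + 2) = (C a * X + C b) * W (n + 1) + (C c * X + C d) * W n) (n : ℕ) :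
    0 < (W (n + 2)).eval 0 :=
  pos_of_twoStep_recurrence (u := fun n => (W n).eval 0) hb hd
    (fun n => by simpa using eval_add_two_of_recurrence hW 0 n) (by simp [hW0]) (by simp [hW1]) n

theorem eval_neg_div_of_recurrence (hc : c ≠ 0) (hW1 : W 1 = X)
    (hW : ∀ n, W (n + 2) = (C a * X + C b) * W (n + 1) + (C c * X + C d) * W n) (n : ℕ) :
    (W (n + 1)).eval (-d / c) = (a * (-d / c) + b) ^ n * (-d / c) := by
  have hzero : c * (-d / c) + d = 0 := by field_simp; ring
  induction n with
  | zero => simp [hW1]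
  | succ k ih =>
    rw [eval_add_two_of_recurrence hW, hzero, ih, pow_succ]
    ring

theorem mul_eval_of_discr_eq_zero (hW0 : W 0 = 1) (hW1 : W 1 = X)
    (hW : ∀ n, W (n + 2) = (C a * X + C b) * W (n + 1) + (C c * X + C d) * W n) {x : ℝ}
    (hΔ : a ^ 2 * x ^ 2 + (2 * a * b + 4 * c) * x + (b ^ 2 + 4 * d) = 0) (n : ℕ) :
    (a * x + b) / 2 * (W n).eval x =
      ((a * x + b) / 2 + (x - (a * x + b) / 2) * n) * ((a * x + b) / 2) ^ n := by
  set t := (a * x + b) / 2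
  have hp : a * x + b = 2 * t := by ring
  have hq : c * x + d = -t ^ 2 := by linear_combination hΔ / 4
  have := eq_of_twoStep_recurrence (p := 2 * t) (q := -t ^ 2)
    (u := fun n => t * (W n).eval x) (v := fun n => (t + (x - t) * n) * t ^ n)
    (fun n => by simp only [eval_add_two_of_recurrence hW, ← hp, ← hq]; ring)
    (twoStep_recurrence_of_repeated_root t t (x - t)) (by simp [hW0]) (by simp [hW1, mul_comm])
  exact congrFun this n

theorem eventually_eval_neg_of_discr_eq_zero (hc : 0 < c) (hd : 0 < d) (hW0 : W 0 = 1)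
    (hW1 : W 1 = X)
    (hW : ∀ n, W (n + 2) = (C a * X + C b) * W (n + 1) + (C c * X + C d) * W n) {x : ℝ}
    (hΔ : a ^ 2 * x ^ 2 + (2 * a * b + 4 * c) * x + (b ^ 2 + 4 * d) = 0)
    (hx : a * x + b < 2 * x) :
    ∀ᶠ n in atTop, Even n → (W n).eval x < 0 := by
  set t := (a * x + b) / 2
  have hxneg : x < 0 := neg_of_quadratic_eq_zero hc hd hΔ
  have htx : t < x := by simp only [t]; linarith
  have htneg : t < 0 := htx.trans hxneg
  obtain ⟨N, hN⟩ := exists_nat_gt (-t / (x - t))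
  filter_upwards [eventually_ge_atTop N] with n hn heven
  have hlin : 0 < t + (x - t) * n := by
    have : -t < (x - t) * n := by
      rw [div_lt_iff₀ (by linarith)] at hN
      nlinarith [(Nat.cast_le (α := ℝ)).2 hn]
    linarith
  have hprod : 0 < t * (W n).eval x := by
    rw [mul_eval_of_discr_eq_zero hW0 hW1 hW hΔ n]
    exact mul_pos hlin (heven.pow_pos htneg.ne)
  exact neg_of_mul_pos_right hprod htneg.le

end Recurrence

/-- If `a * d > b * c`, `ΔΔ ≥ 0`, and at least one of `(2 - a) * xΔ⁺ - b`,
`(2 - a) * xΔ⁻ - b` is positive, then there exists `N` such that `W n` has at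
least one real root for all `n > N`. -/
theorem stmt_4 (a b c d : ℝ) (ha : 0 < a) (hb : 0 < b) (hc : 0 < c) (hd : 0 < d)
    (W : ℕ → Polynomial ℝ)
    (hW0 : W 0 = 1) (hW1 : W 1 = X)
    (hW : ∀ n : ℕ, W (n + 2) = (C a * X + C b) * W (n + 1) + (C c * X + C d) * W n)
    (DD : ℝ) (hDD : DD = -a ^ 2 * d + a * b * c + c ^ 2)
    (xdm xdp : ℝ)
    (hxdm : xdm = (-(a * b) - 2 * c - 2 * Real.sqrt DD) / a ^ 2)
    (hxdp : xdp = (-(a * b) - 2 * c + 2 * Real.sqrt DD) / a ^ 2)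
    (had : b * c < a * d) (hDD0 : 0 ≤ DD)
    (hpos : 0 < (2 - a) * xdp - b ∨ 0 < (2 - a) * xdm - b) :
    ∃ N : ℕ, ∀ n : ℕ, N < n → ∃ x : ℝ, (W n).IsRoot x := by
  obtain ⟨x, hΔ, hx⟩ : ∃ x, a ^ 2 * x ^ 2 + (2 * a * b + 4 * c) * x + (b ^ 2 + 4 * d) = 0 ∧
      a * x + b < 2 * x := by
    have hs : Real.sqrt DD ^ 2 = DD := Real.sq_sqrt hDD0
    rcases hpos with h | h
    · exact ⟨xdp, quadratic_eq_zero_of_root_formula ha.ne' (hs.trans hDD) hxdp, by linarith⟩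
    · exact ⟨xdm, quadratic_eq_zero_of_root_formula ha.ne' (by rw [neg_sq, hs, hDD])
        (by rw [hxdm]; ring), by linarith⟩
  have hz₀ : -d / c < 0 := div_neg_of_neg_of_pos (neg_neg_of_pos hd) hc
  have hpole : a * (-d / c) + b < 0 := by
    rw [show a * (-d / c) + b = (b * c - a * d) / c by field_simp; ring]
    exact div_neg_of_neg_of_pos (by linarith) hc
  obtain ⟨N, hN⟩ :=
    eventually_atTop.1 (eventually_eval_neg_of_discr_eq_zero hc hd hW0 hW1 hW hΔ hx)
  refine ⟨N + 2, fun n hn => ?_⟩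
  obtain ⟨m, rfl⟩ : ∃ m, n = m + 2 := ⟨n - 2, by omega⟩
  have h0 := eval_zero_pos_of_recurrence hb hd hW0 hW1 hW m
  rcases Nat.even_or_odd m with heven | hodd
  · have hneg := hN (m + 2) (by omega) (heven.add even_two)
    exact exists_isRoot_of_eval_neg_of_eval_pos (neg_of_quadratic_eq_zero hc hd hΔ).le hneg h0
  · have hneg : (W (m + 1 + 1)).eval (-d / c) < 0 := by
      rw [eval_neg_div_of_recurrence hc.ne' hW1 hW]
      exact mul_neg_of_pos_of_neg (hodd.add_one.pow_pos hpole.ne) hz₀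
    exact exists_isRoot_of_eval_neg_of_eval_pos hz₀.le hneg h0
end

section
/- The sign of W_n at the point −b/a is as follows: (i) if ad < bc, then (−1)^⌈n/2⌉ · W_n(−b/a) > 0 for every n ≥ 0; (ii) if ad = bc, then W_n(−b/a) = 0 for every n ≥ 2; (iii) if ad > bc, then (−1)^n · W_n(−b/a) > 0 for every n ≥ 0. -/
/-! At `x = -b/a` the coefficient `a x + b` vanishes, so the recurrence collapses to
`W (n+2) (x) = k * W n (x)` with `k = (a d - b c) / a`. Hence `W (2m) (x) = k ^ m` and
`W (2m+1) (x) = k ^ m * x` with `x < 0`, and the sign of `k` decides each case. -/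

open Polynomial

theorem pow_mul_of_add_two_eq_mul {M : Type*} [Monoid M] {u : ℕ → M} {k : M}
    (hu : ∀ n, u (n + 2) = k * u n) (m r : ℕ) : u (2 * m + r) = k ^ m * u r := by
  induction m with
  | zero => simp
  | succ m ih => rw [show 2 * (m + 1) + r = 2 * m + r + 2 by omega, hu, ih, pow_succ', mul_assoc]

theorem eval_neg_div_add_two_of_recurrence {a b c d : ℝ} (ha : a ≠ 0) {W : ℕ → ℝ[X]}
    (hW : ∀ n, W (n + 2) = (C a * X + C b) * W (n + 1) + (C c * X + C d) * W n) (n : ℕ) :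
    (W (n + 2)).eval (-b / a) = (a * d - b * c) / a * (W n).eval (-b / a) := by
  rw [hW n]
  simp only [eval_add, eval_mul, eval_C, eval_X]
  field_simp
  ring

theorem stmt_5_general (a b c d : ℝ) (ha : 0 < a) (hb : 0 < b)
    (W : ℕ → Polynomial ℝ)
    (hW0 : W 0 = 1) (hW1 : W 1 = X)
    (hW : ∀ n : ℕ, W (n + 2) = (C a * X + C b) * W (n + 1) + (C c * X + C d) * W n) :
    (a * d < b * c → ∀ n : ℕ, 0 < (-1 : ℝ) ^ ((n + 1) / 2) * (W n).eval (-b / a)) ∧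
    (a * d = b * c → ∀ n : ℕ, 2 ≤ n → (W n).eval (-b / a) = 0) ∧
    (b * c < a * d → ∀ n : ℕ, 0 < (-1 : ℝ) ^ n * (W n).eval (-b / a)) := by
  set k := (a * d - b * c) / a
  have hstep := eval_neg_div_add_two_of_recurrence ha.ne' hW
  have hx : -b / a < 0 := div_neg_of_neg_of_pos (neg_neg_of_pos hb) ha
  have heven (m : ℕ) : (W (2 * m)).eval (-b / a) = k ^ m := by
    simpa [hW0] using pow_mul_of_add_two_eq_mul (u := fun n ↦ (W n).eval (-b / a)) hstep m 0
  have hodd (m : ℕ) : (W (2 * m + 1)).eval (-b / a) = k ^ m * (-b / a) := by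
    simpa [hW1] using pow_mul_of_add_two_eq_mul (u := fun n ↦ (W n).eval (-b / a)) hstep m 1
  refine ⟨fun h n ↦ ?_, fun h n hn ↦ ?_, fun h n ↦ ?_⟩
  · have hk : 0 < -k := neg_pos.mpr (div_neg_of_neg_of_pos (by linarith) ha)
    obtain ⟨m, rfl | rfl⟩ := Nat.even_or_odd' n
    · rw [show (2 * m + 1) / 2 = m by omega, heven, ← mul_pow, neg_one_mul]
      positivity
    · rw [show (2 * m + 1 + 1) / 2 = m + 1 by omega, hodd,
        show (-1 : ℝ) ^ (m + 1) * (k ^ m * (-b / a)) = (-k) ^ m * -(-b / a) by rw [neg_pow k]; ring]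
      exact mul_pos (pow_pos hk m) (neg_pos.mpr hx)
  · obtain ⟨m, rfl⟩ := Nat.exists_eq_add_of_le' hn
    rw [hstep, show a * d - b * c = 0 by linarith, zero_div, zero_mul]
  · have hk : 0 < k := div_pos (by linarith) ha
    obtain ⟨m, rfl | rfl⟩ := Nat.even_or_odd' n
    · rw [heven, (even_two_mul m).neg_one_pow, one_mul]
      positivity
    · rw [hodd, (odd_two_mul_add_one m).neg_one_pow, neg_one_mul, ← mul_neg]
      exact mul_pos (pow_pos hk m) (neg_pos.mpr hx)

/-- The sign of `W n` at the point `-b/a`: if `a*d < b*c` then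
`(-1)^⌈n/2⌉ * W n (-b/a) > 0`; if `a*d = b*c` then `W n (-b/a) = 0` for `n ≥ 2`;
if `a*d > b*c` then `(-1)^n * W n (-b/a) > 0`. -/
theorem stmt_5 (a b c d : ℝ) (ha : 0 < a) (hb : 0 < b) (hc : 0 < c) (hd : 0 < d)
    (W : ℕ → Polynomial ℝ)
    (hW0 : W 0 = 1) (hW1 : W 1 = X)
    (hW : ∀ n : ℕ, W (n + 2) = (C a * X + C b) * W (n + 1) + (C c * X + C d) * W n) :
    (a * d < b * c → ∀ n : ℕ, 0 < (-1 : ℝ) ^ ((n + 1) / 2) * (W n).eval (-b / a)) ∧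
    (a * d = b * c → ∀ n : ℕ, 2 ≤ n → (W n).eval (-b / a) = 0) ∧
    (b * c < a * d → ∀ n : ℕ, 0 < (-1 : ℝ) ^ n * (W n).eval (-b / a)) :=
  stmt_5_general a b c d ha hb W hW0 hW1 hW
end

section
/- If a complex number w satisfies a²w² + (2ab + 4c)w + (b² + 4d) = 0, then for every n ≥ 1, W_n(w) = (((aw + b) + n·((2 − a)w − b))/2) · ((aw + b)/2)^{n−1}. -/
open Polynomial

/-- If `w : ℂ` satisfies `a² w² + (2ab + 4c) w + (b² + 4d) = 0`, then for every
`n ≥ 1`, `W n (w) = ((A(w) + n h(w)) / 2) * (A(w) / 2)^(n-1)` where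
`A(w) = a w + b` and `h(w) = (2 - a) w - b`. -/
theorem stmt_7 (a b c d : ℝ) (ha : 0 < a) (hb : 0 < b) (hc : 0 < c) (hd : 0 < d)
    (W : ℕ → Polynomial ℝ)
    (hW0 : W 0 = 1) (hW1 : W 1 = X)
    (hW : ∀ n : ℕ, W (n + 2) = (C a * X + C b) * W (n + 1) + (C c * X + C d) * W n)
    (w : ℂ)
    (hw : (a : ℂ) ^ 2 * w ^ 2 + (2 * (a : ℂ) * b + 4 * c) * w + ((b : ℂ) ^ 2 + 4 * d) = 0) :
    ∀ n : ℕ, 1 ≤ n →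
      aeval w (W n) =
        ((((a : ℂ) * w + b) + (n : ℂ) * (((2 : ℂ) - a) * w - b)) / 2) *
          (((a : ℂ) * w + b) / 2) ^ (n - 1) := by
  set u : ℂ := ((a : ℂ) * w + b) / 2 with hu
  set k : ℂ := (((2 : ℂ) - a) * w - b) / 2 with hk
  have hcd : (c : ℂ) * w + d = -u ^ 2 := by
    rw [hu]; linear_combination hw / 4
  have hrec : ∀ n : ℕ, aeval w (W (n + 2)) =
      ((a : ℂ) * w + b) * aeval w (W (n + 1)) + ((c : ℂ) * w + d) * aeval w (W n) := by
    intro n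
    rw [hW n]
    simp [map_add, map_mul, aeval_X, aeval_C]
  have key : ∀ n : ℕ, aeval w (W (n + 1)) = (u + ((n : ℂ) + 1) * k) * u ^ n := by
    intro n
    induction n using Nat.twoStepInduction with
    | zero =>
      simp [hW1, hu, hk]; ring
    | one =>
      rw [hrec 0, hW1, hW0, hcd]
      simp only [aeval_X, map_one]
      push_cast
      rw [hu, hk]; ring
    | more n ih1 ih2 =>
      rw [show n + 2 + 1 = n + 1 + 2 by ring, hrec (n + 1), ih1, ih2, hcd]
      have : ((a : ℂ) * w + b) = 2 * u := by rw [hu]; ring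
      rw [this]
      push_cast
      ring
  intro n hn
  obtain ⟨m, rfl⟩ : ∃ m, n = m + 1 := ⟨n - 1, (Nat.succ_pred_eq_of_pos hn).symm⟩
  rw [key m]
  have h2 : ((a : ℂ) * w + b) = 2 * u := by rw [hu]; ring
  have h3 : (((2 : ℂ) - a) * w - b) = 2 * k := by rw [hk]; ring
  rw [h2, h3]
  simp only [Nat.add_sub_cancel]
  push_cast
  ring
end

section
/- Suppose Δ_Δ ≥ 0. Then for every integer n ≥ 0: if h(x_Δ^−) ≤ 0, or if h(x_Δ^−) > 0 and n < n^−, then (−1)^n · W_n(x_Δ^−) > 0; if h(x_Δ^−) > 0 and n = n^−, then W_n(x_Δ^−) = 0; and if h(x_Δ^−) > 0 and n > n^−, then (−1)^{n+1} · W_n(x_Δ^−) > 0. Moreover, if a ≤ 2 then h(x_Δ^−) < 0 and h(x_Δ^+) < 0. -/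
/-!
At `x = xΔ⁻` the discriminant `Δ(x) = A(x)² + 4(cx + d)` vanishes, so the characteristic
polynomial `t² - A(x) t - (cx + d)` of the recurrence evaluated at `x` has the double root
`A(x)/2`. Hence `W n (x) = (A + n h)/A · (A/2)ⁿ` with `A = A(x) < 0` and `h = h(x)`, and the
sign of `(-1)ⁿ W n (x)` is the sign of `-(A + n h)`, which changes exactly at `n = n⁻`.
Both roots `xΔ±` are negative, which gives `h(xΔ±) < 0` when `a ≤ 2`.
-/

open Polynomial

theorem double_root_recurrence_mul_eq {R : Type*} [CommRing R] (r : R) (u : ℕ → R)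
    (hu : ∀ n, u (n + 2) = 2 * r * u (n + 1) - r ^ 2 * u n) (n : ℕ) :
    r * u n = r ^ n * (r * u 0 + n * (u 1 - r * u 0)) := by
  induction n using Nat.twoStepInduction with
  | zero => simp
  | one => ring
  | more n ih₀ ih₁ =>
    push_cast at ih₁ ⊢
    linear_combination r * hu n + 2 * r * ih₁ - r ^ 2 * ih₀

theorem eval_eq_of_discr_eq_zero {K : Type*} [Field K] [CharZero K] (a b c d x : K)
    (W : ℕ → K[X]) (hW0 : W 0 = 1) (hW1 : W 1 = X)
    (hW : ∀ n : ℕ, W (n + 2) = (C a * X + C b) * W (n + 1) + (C c * X + C d) * W n)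
    (hdiscr : (a * x + b) ^ 2 + 4 * (c * x + d) = 0) (hA : a * x + b ≠ 0) (n : ℕ) :
    (W n).eval x =
      (a * x + b + n * ((2 - a) * x - b)) / (a * x + b) * ((a * x + b) / 2) ^ n := by
  have hu : ∀ n, (W (n + 2)).eval x = 2 * ((a * x + b) / 2) * (W (n + 1)).eval x
      - ((a * x + b) / 2) ^ 2 * (W n).eval x := fun n => by
    rw [hW]
    simp only [eval_add, eval_mul, eval_C, eval_X]
    linear_combination (W n).eval x / 4 * hdiscr
  have h := double_root_recurrence_mul_eq ((a * x + b) / 2) (fun n => (W n).eval x) hu n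
  rw [hW0, hW1, eval_one, eval_X] at h
  field_simp
  linear_combination 2 * h

section RootsOfDiscr

variable {a b c d s x : ℝ}

theorem discr_eq_zero_of_discr_root (ha : a ≠ 0) (hs : s ^ 2 = -a ^ 2 * d + a * b * c + c ^ 2)
    (hx : a ^ 2 * x = -(a * b) - 2 * c + 2 * s) :
    (a * x + b) ^ 2 + 4 * (c * x + d) = 0 := by
  have ha2 : a ^ 2 ≠ 0 := pow_ne_zero 2 ha
  apply mul_left_cancel₀ ha2
  linear_combination (a ^ 2 * x + a * b + 2 * c + 2 * s) * hx + 4 * hs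

theorem discr_root_neg (ha : 0 < a) (hb : 0 < b) (hc : 0 < c) (hd : 0 < d)
    (hs : s ^ 2 = -a ^ 2 * d + a * b * c + c ^ 2)
    (hx : a ^ 2 * x = -(a * b) - 2 * c + 2 * s) :
    x < 0 := by
  have hab : 0 < a * b := mul_pos ha hb
  -- `(ab + 2c)² - (2s)² = a²(b² + 4d) > 0`
  have hs_lt : 2 * s < a * b + 2 * c := by
    nlinarith [mul_pos (mul_pos ha ha) hd, sq_nonneg (a * b)]
  nlinarith [pow_pos ha 2]

theorem mul_add_neg_of_discr_root (ha : 0 < a) (hc : 0 < c) (hs : s ≤ 0)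
    (hx : a ^ 2 * x = -(a * b) - 2 * c + 2 * s) :
    a * x + b < 0 := by
  have : a * (a * x + b) = -2 * c + 2 * s := by linear_combination hx
  exact neg_of_mul_neg_right (by linarith) ha.le

end RootsOfDiscr

/-- Sign of `W n` at `xΔ⁻` (assuming `ΔΔ ≥ 0`), and negativity of `h(xΔ±)` when
`a ≤ 2`. Here `h(z) = (2 - a) z - b`, `A(z) = a z + b` and
`n⁻ = -A(xΔ⁻)/h(xΔ⁻)`. -/
theorem stmt_8 (a b c d : ℝ) (ha : 0 < a) (hb : 0 < b) (hc : 0 < c) (hd : 0 < d)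
    (W : ℕ → Polynomial ℝ)
    (hW0 : W 0 = 1) (hW1 : W 1 = X)
    (hW : ∀ n : ℕ, W (n + 2) = (C a * X + C b) * W (n + 1) + (C c * X + C d) * W n)
    (DD : ℝ) (hDD : DD = -a ^ 2 * d + a * b * c + c ^ 2) (hDD0 : 0 ≤ DD)
    (xdm xdp : ℝ)
    (hxdm : xdm = (-(a * b) - 2 * c - 2 * Real.sqrt DD) / a ^ 2)
    (hxdp : xdp = (-(a * b) - 2 * c + 2 * Real.sqrt DD) / a ^ 2)
    (nminus : ℝ) (hnminus : nminus = -(a * xdm + b) / ((2 - a) * xdm - b)) :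
    (∀ n : ℕ,
      (((2 - a) * xdm - b ≤ 0 ∨ (0 < (2 - a) * xdm - b ∧ (n : ℝ) < nminus)) →
        0 < (-1 : ℝ) ^ n * (W n).eval xdm) ∧
      ((0 < (2 - a) * xdm - b ∧ (n : ℝ) = nminus) → (W n).eval xdm = 0) ∧
      ((0 < (2 - a) * xdm - b ∧ nminus < (n : ℝ)) →
        0 < (-1 : ℝ) ^ (n + 1) * (W n).eval xdm)) ∧
    (a ≤ 2 → (2 - a) * xdm - b < 0 ∧ (2 - a) * xdp - b < 0) := by
  have hsq : Real.sqrt DD ^ 2 = DD := Real.sq_sqrt hDD0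
  have hsq_neg : (-Real.sqrt DD) ^ 2 = DD := by rw [neg_sq, hsq]
  have hxm : a ^ 2 * xdm = -(a * b) - 2 * c + 2 * -Real.sqrt DD := by
    rw [hxdm]; field_simp; ring
  have hxp : a ^ 2 * xdp = -(a * b) - 2 * c + 2 * Real.sqrt DD := by
    rw [hxdp]; field_simp
  refine ⟨fun n => ?_, fun ha2 =>
    ⟨by nlinarith [discr_root_neg ha hb hc hd (hsq_neg.trans hDD) hxm],
     by nlinarith [discr_root_neg ha hb hc hd (hsq.trans hDD) hxp]⟩⟩
  set A := a * xdm + b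
  set h := (2 - a) * xdm - b
  have hA : A < 0 := mul_add_neg_of_discr_root ha hc (neg_nonpos.mpr (Real.sqrt_nonneg DD)) hxm
  have hWn : (W n).eval xdm = (A + n * h) / A * (A / 2) ^ n :=
    eval_eq_of_discr_eq_zero a b c d xdm W hW0 hW1 hW
      (discr_eq_zero_of_discr_root ha.ne' (hsq_neg.trans hDD) hxm) hA.ne n
  have hsign : (-1 : ℝ) ^ n * (W n).eval xdm = (A + n * h) / A * (-(A / 2)) ^ n := by
    rw [hWn, neg_pow (A / 2), mul_left_comm]
  have hpow : 0 < (-(A / 2)) ^ n := pow_pos (by linarith) n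
  subst hnminus
  refine ⟨fun hcase => ?_, fun ⟨hh, hn⟩ => ?_, fun ⟨hh, hn⟩ => ?_⟩
  · have hnum : A + n * h < 0 := by
      rcases hcase with hh | ⟨hh, hn⟩
      · nlinarith [(Nat.cast_nonneg n : (0 : ℝ) ≤ n)]
      · linarith [(lt_div_iff₀ hh).mp hn]
    rw [hsign]
    exact mul_pos (div_pos_of_neg_of_neg hnum hA) hpow
  · rw [eq_div_iff hh.ne'] at hn
    rw [hWn, show A + n * h = 0 by linarith, zero_div, zero_mul]
  · have hnum : 0 < A + n * h := by linarith [(div_lt_iff₀ hh).mp hn]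
    rw [pow_succ, mul_comm _ (-1 : ℝ), mul_assoc, hsign, neg_one_mul, neg_pos]
    exact mul_neg_of_neg_of_pos (div_neg_of_pos_of_neg hnum hA) hpow
end

section
/- If ad < bc, then W_n(x_Δ^+) < 0 for every n ≥ 1. -/
open Polynomial

/-- If `a * d < b * c`, then `W n (xΔ⁺) < 0` for every `n ≥ 1`. -/
theorem stmt_9 (a b c d : ℝ) (ha : 0 < a) (hb : 0 < b) (hc : 0 < c) (hd : 0 < d)
    (W : ℕ → Polynomial ℝ)
    (hW0 : W 0 = 1) (hW1 : W 1 = X)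
    (hW : ∀ n : ℕ, W (n + 2) = (C a * X + C b) * W (n + 1) + (C c * X + C d) * W n)
    (DD : ℝ) (hDD : DD = -a ^ 2 * d + a * b * c + c ^ 2)
    (xdp : ℝ) (hxdp : xdp = (-(a * b) - 2 * c + 2 * Real.sqrt DD) / a ^ 2)
    (had : a * d < b * c) :
    ∀ n : ℕ, 1 ≤ n → (W n).eval xdp < 0 := by
  have ha' : a ≠ 0 := ne_of_gt ha
  set s := Real.sqrt DD with hs
  have hDDpos : 0 < DD := by nlinarith
  have hs2 : s ^ 2 = DD := Real.sq_sqrt hDDpos.le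
  have hsc : c < s := by
    nlinarith [Real.sqrt_nonneg DD, hs2]
  have hxneg : xdp < 0 := by
    rw [hxdp]
    apply div_neg_of_neg_of_pos _ (by positivity)
    have : s < (a * b + 2 * c) / 2 := by
      rw [show s = Real.sqrt DD from rfl]
      rw [Real.sqrt_lt' (by positivity)]
      nlinarith [mul_pos (mul_pos ha ha) hd, sq_nonneg (a * b)]
    linarith
  set r : ℝ := (a * xdp + b) / 2 with hr
  have hrpos : 0 < r := by
    have : a * xdp + b = (2 * s - 2 * c) / a := by
      rw [hxdp]; field_simp; ring
    rw [hr, this]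
    exact div_pos (div_pos (by linarith) ha) two_pos
  have hq : c * xdp + d = -(r ^ 2) := by
    rw [hr, hxdp]
    field_simp
    nlinarith [hs2]
  have hp : a * xdp + b = 2 * r := by rw [hr]; ring
  set u : ℕ → ℝ := fun n => (W n).eval xdp with hu
  have hrec : ∀ n : ℕ, u (n + 2) = 2 * r * u (n + 1) + (-(r ^ 2)) * u n := by
    intro n
    simp only [hu, hW n, eval_add, eval_mul, eval_C, eval_X]
    rw [← hp, ← hq]
  have hu0 : u 0 = 1 := by simp [hu, hW0]
  have hu1 : u 1 = xdp := by simp [hu, hW1]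
  have key : ∀ n : ℕ, u (n + 1) < 0 ∧ u (n + 2) < r * u (n + 1) := by
    intro n
    induction n with
    | zero =>
      constructor
      · rw [hu1]; exact hxneg
      · rw [hrec 0, hu0, hu1]
        nlinarith
    | succ k ih =>
      obtain ⟨h1, h2⟩ := ih
      have h3 : u (k + 2) < 0 := lt_trans h2 (by nlinarith)
      refine ⟨h3, ?_⟩
      rw [hrec (k + 1)]
      nlinarith
  intro n hn
  obtain ⟨m, rfl⟩ := Nat.exists_eq_add_of_le hn
  have := (key m).1
  simpa [hu, Nat.add_comm] using this
end

section
/- Suppose ad ≤ bc and a > 1. Then Δ_Δ > 0, Δ_g > 0, and x_g^− ≤ x_Δ^−, with equality x_g^− = x_Δ^− holding if and only if Δ_Δ = Δ_g. -/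
open Polynomial

set_option maxHeartbeats 2000000 in
/-- If `a * d ≤ b * c` and `a > 1`, then `ΔΔ > 0`, `Δg > 0`, and `x_g⁻ ≤ xΔ⁻`,
with equality if and only if `ΔΔ = Δg`. -/
theorem stmt_10 (a b c d : ℝ) (ha : 0 < a) (hb : 0 < b) (hc : 0 < c) (hd : 0 < d)
    (W : ℕ → Polynomial ℝ)
    (hW0 : W 0 = 1) (hW1 : W 1 = X)
    (hW : ∀ n : ℕ, W (n + 2) = (C a * X + C b) * W (n + 1) + (C c * X + C d) * W n)
    (DD Dg : ℝ)
    (hDD : DD = -a ^ 2 * d + a * b * c + c ^ 2)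
    (hDg : Dg = (b + c) ^ 2 + 4 * d * (1 - a))
    (xdm xgm : ℝ)
    (hxdm : xdm = (-(a * b) - 2 * c - 2 * Real.sqrt DD) / a ^ 2)
    (hxgm : xgm = if a = 1 then -d / (b + c)
      else (b + c) / (2 * (1 - a)) - Real.sqrt Dg / (2 * |1 - a|))
    (had : a * d ≤ b * c) (ha1 : 1 < a) :
    0 < DD ∧ 0 < Dg ∧ xgm ≤ xdm ∧ (xgm = xdm ↔ DD = Dg) := by
  have hDD0 : 0 < DD := by nlinarith [mul_pos hc hc, mul_pos ha hd]
  have hDg0 : 0 < Dg := by nlinarith [sq_nonneg (b - c)]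
  set s := Real.sqrt DD with hsdef
  set t := Real.sqrt Dg with htdef
  have hs0 : 0 < s := Real.sqrt_pos.mpr hDD0
  have ht0 : 0 < t := Real.sqrt_pos.mpr hDg0
  have hs2 : s ^ 2 = -a ^ 2 * d + a * b * c + c ^ 2 := by
    rw [hsdef, Real.sq_sqrt hDD0.le, hDD]
  have ht2 : t ^ 2 = (b + c) ^ 2 + 4 * d * (1 - a) := by
    rw [htdef, Real.sq_sqrt hDg0.le, hDg]
  have hane : a ≠ 1 := ne_of_gt ha1
  have hab : |1 - a| = a - 1 := by rw [abs_of_neg (by linarith)]; ring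
  have hxgm' : xgm = (b + c) / (2 * (1 - a)) - t / (2 * (a - 1)) := by
    rw [hxgm, if_neg hane, hab]
  have ha1' : (0:ℝ) < a - 1 := by linarith
  have ha0 : a ≠ 0 := ne_of_gt ha
  have h1a : (1:ℝ) - a ≠ 0 := by intro h; apply hane; linarith
  have ha1ne : a - 1 ≠ 0 := ne_of_gt ha1'
  have ha2 : (0:ℝ) < a ^ 2 := by positivity
  set K : ℝ := 2 * (a - 1) * (a * b + 2 * c) - a ^ 2 * (b + c) with hKdef
  -- I1 : (a²t-K)(a²t+K) = 4(a-1)((ac-ab-2c)² + a²s²) > 0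
  have hI1 : (a ^ 2 * t - K) * (a ^ 2 * t + K) =
      4 * (a - 1) * ((a * c - a * b - 2 * c) ^ 2 + a ^ 2 * s ^ 2) := by
    rw [hKdef]
    linear_combination a ^ 4 * ht2 - 4 * (a - 1) * a ^ 2 * hs2
  have hI1pos : 0 < (a ^ 2 * t - K) * (a ^ 2 * t + K) := by
    rw [hI1]
    have h0 : 0 < a ^ 2 * s ^ 2 := by positivity
    nlinarith [sq_nonneg (a * c - a * b - 2 * c)]
  have hat : 0 < a ^ 2 * t := by positivity
  have hKlt : 0 < a ^ 2 * t - K := by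
    rcases lt_or_ge 0 (a ^ 2 * t - K) with h | h
    · exact h
    · exfalso
      have h1 : 0 < a ^ 2 * t + K := by linarith
      have h2 : 0 ≤ (-(a ^ 2 * t - K)) * (a ^ 2 * t + K) :=
        mul_nonneg (by linarith) h1.le
      nlinarith [hI1pos]
  -- I2 : (a²t-K)² - (4(a-1)s)² = a²((a-2)t + (ac-ab-2c))²
  have hI2 : (a ^ 2 * t - K) ^ 2 - (4 * (a - 1) * s) ^ 2 =
      a ^ 2 * ((a - 2) * t + (a * c - a * b - 2 * c)) ^ 2 := by
    rw [hKdef]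
    linear_combination (a ^ 4 - a ^ 2 * (a - 2) ^ 2) * ht2 - 16 * (a - 1) ^ 2 * hs2
  have h4s : 0 < 4 * (a - 1) * s := by positivity
  have hmain : 4 * (a - 1) * s ≤ a ^ 2 * t - K := by
    have hY2 : (4 * (a - 1) * s) ^ 2 ≤ (a ^ 2 * t - K) ^ 2 := by
      have hz := mul_nonneg ha2.le (sq_nonneg ((a - 2) * t + (a * c - a * b - 2 * c)))
      linarith [hI2]
    exact le_of_pow_le_pow_left₀ two_ne_zero hKlt.le hY2
  -- difference formula
  have hdiff : xdm - xgm = (a ^ 2 * t - K - 4 * (a - 1) * s) / (2 * (a - 1) * a ^ 2) := by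
    rw [hxdm, hxgm', hKdef]
    field_simp
    ring
  have hden : (0:ℝ) < 2 * (a - 1) * a ^ 2 := by positivity
  have hle : xgm ≤ xdm := by
    have h0 : 0 ≤ xdm - xgm := by
      rw [hdiff]
      exact div_nonneg (by linarith) hden.le
    linarith
  refine ⟨hDD0, hDg0, hle, ?_, ?_⟩
  · -- xgm = xdm → DD = Dg
    intro heq
    have hz : a ^ 2 * t - K - 4 * (a - 1) * s = 0 := by
      have h0 : (a ^ 2 * t - K - 4 * (a - 1) * s) / (2 * (a - 1) * a ^ 2) = 0 := by
        rw [← hdiff, heq]; ring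
      rcases div_eq_zero_iff.mp h0 with h | h
      · exact h
      · exact absurd h hden.ne'
    have hsq : ((a - 2) * t + (a * c - a * b - 2 * c)) ^ 2 = 0 := by
      have h1 : (a ^ 2 * t - K) ^ 2 - (4 * (a - 1) * s) ^ 2 = 0 := by
        have : a ^ 2 * t - K = 4 * (a - 1) * s := by linarith
        rw [this]; ring
      rw [hI2] at h1
      have h2 : a ^ 2 * ((a - 2) * t + (a * c - a * b - 2 * c)) ^ 2 = 0 := h1
      rcases mul_eq_zero.mp h2 with h | h
      · exact absurd h ha2.ne'
      · exact h
    have hq : (a - 2) * t = a * b + 2 * c - a * c := by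
      have h0 := pow_eq_zero_iff (n := 2) (by norm_num) |>.mp hsq
      linarith
    have hq2 : (a - 2) ^ 2 * ((b + c) ^ 2 + 4 * d * (1 - a)) =
        (a * b + 2 * c - a * c) ^ 2 := by
      linear_combination ((a - 2) * t + (a * b + 2 * c - a * c)) * hq -
        (a - 2) ^ 2 * ht2
    have h4 : 4 * (1 - a) * (DD - Dg) = 0 := by
      linear_combination 4 * (1 - a) * hDD - 4 * (1 - a) * hDg - hq2
    rcases mul_eq_zero.mp h4 with h | h
    · exfalso
      rcases mul_eq_zero.mp h with h' | h'
      · norm_num at h'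
      · exact h1a h'
    · linarith
  · -- DD = Dg → xgm = xdm
    intro heq
    have hst : s = t := by rw [hsdef, htdef, heq]
    have hkey : d * (a - 2) ^ 2 = b * (a * c - b - 2 * c) := by
      linear_combination hDD - hDg - heq
    have h1 : 0 ≤ b * (a * c - b - 2 * c) := hkey ▸ mul_nonneg hd.le (sq_nonneg (a - 2))
    have h2 : 0 ≤ a * c - b - 2 * c := by
      by_contra h
      push_neg at h
      have := mul_neg_of_pos_of_neg hb h
      linarith
    have ha2' : 2 < a := by
      by_contra h
      push_neg at h
      have h3 : c * (a - 2) ≤ 0 := mul_nonpos_of_nonneg_of_nonpos hc.le (by linarith)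
      have h4 : c * (a - 2) = a * c - 2 * c := by ring
      linarith
    have hpos : 0 < a * b + 2 * c - a * c := by
      have h3 : a * d * (a - 2) ^ 2 ≤ b * c * (a - 2) ^ 2 :=
        mul_le_mul_of_nonneg_right had (sq_nonneg (a - 2))
      have e1 : b * (a * (a * c - b - 2 * c)) = a * d * (a - 2) ^ 2 := by
        linear_combination (-a) * hkey
      have e3 : b * (c * (a - 2) ^ 2) = b * c * (a - 2) ^ 2 := by ring
      have h5 : b * (a * (a * c - b - 2 * c)) ≤ b * (c * (a - 2) ^ 2) := by linarith
      have h6 : a * (a * c - b - 2 * c) ≤ c * (a - 2) ^ 2 :=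
        le_of_mul_le_mul_left h5 hb
      have e4 : a * (a * c - b - 2 * c) = a ^ 2 * c - a * b - 2 * (a * c) := by ring
      have e5 : c * (a - 2) ^ 2 = a ^ 2 * c - 4 * (a * c) + 4 * c := by ring
      have hca2 : 0 < c * (a - 2) := mul_pos hc (by linarith)
      have e6 : c * (a - 2) = a * c - 2 * c := by ring
      linarith
    have hDg2 : (a - 2) ^ 2 * Dg = (a * b + 2 * c - a * c) ^ 2 := by
      linear_combination (a - 2) ^ 2 * hDg + 4 * (1 - a) * hkey
    have hfac : ((a - 2) * t - (a * b + 2 * c - a * c)) *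
        ((a - 2) * t + (a * b + 2 * c - a * c)) = 0 := by
      linear_combination (a - 2) ^ 2 * ht2 - (a - 2) ^ 2 * hDg + hDg2
    have hq : (a - 2) * t = a * b + 2 * c - a * c := by
      rcases mul_eq_zero.mp hfac with h | h
      · linarith
      · exfalso
        have : 0 < (a - 2) * t := mul_pos (by linarith) ht0
        linarith
    have hz : a ^ 2 * t - K - 4 * (a - 1) * s = 0 := by
      rw [hst, hKdef]
      linear_combination (a - 2) * hq
    have h0 : xdm - xgm = 0 := by rw [hdiff, hz]; simp
    linarith
end

section
/- If ad < bc, then Δ_Δ > 0, Δ_g > 0, and u ≤ x_Δ^− < −b/a < x_Δ^+ < v < 0. If ad = bc, then u < −b/a = x_Δ^+ < v < 0. -/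
/-!
Once `a d ≤ b c` we have `Δ_Δ ≥ c² > 0`, and the roots of `Δ` satisfy
`a² x_Δ^± + a b + 2 c = ± 2 √Δ_Δ`; hence `x_Δ^− < −b/a`, while `x_Δ^+ − (−b/a)` has the sign
of `√Δ_Δ − c`, i.e. of `b c − a d`. The two quadratics are linked by the identity
`4 g(z) = ((2 − a) z − b)² − Δ(z)`: at the roots of `Δ` it gives `g ≥ 0`, and `g(x_Δ^+) > 0`
because `(2 − a) x_Δ^+ − b = 2 x_Δ^+ − (a x_Δ^+ + b) < 0`. Together with `g(0) = −d < 0`,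
the sign of `(1 − a) g` at `0`, `x_Δ^−` and `x_Δ^+` places these points relative to the roots
of `g`, which yields `u ≤ x_Δ^−` and `x_Δ^+ < v < 0`.
-/

open Polynomial Set

namespace QuadraticRoots

variable {e f h x : ℝ}

/-- With `|e|` in the denominator, `lowerRoot ≤ upperRoot` whatever the sign of `e`. -/
noncomputable def lowerRoot (e f h : ℝ) : ℝ := -f / (2 * e) - √(discrim e f h) / (2 * |e|)

noncomputable def upperRoot (e f h : ℝ) : ℝ := -f / (2 * e) + √(discrim e f h) / (2 * |e|)

lemma lowerRoot_le_upperRoot : lowerRoot e f h ≤ upperRoot e f h := by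
  have : 0 ≤ √(discrim e f h) / (2 * |e|) := by positivity
  rw [lowerRoot, upperRoot]
  linarith

lemma mul_quadratic_eq (he : e ≠ 0) (hD : 0 ≤ discrim e f h) (x : ℝ) :
    e * (e * (x * x) + f * x + h) =
      e ^ 2 * ((x - lowerRoot e f h) * (x - upperRoot e f h)) := by
  have ht : e ^ 2 * (√(discrim e f h) / (2 * |e|)) ^ 2 = (f ^ 2 - 4 * e * h) / 4 := by
    rw [div_pow, Real.sq_sqrt hD, mul_pow, sq_abs, discrim]; field_simp; ring
  have hm : e * (-f / (2 * e)) = -f / 2 := by field_simp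
  rw [lowerRoot, upperRoot]
  generalize √(discrim e f h) / (2 * |e|) = t at ht ⊢
  generalize -f / (2 * e) = m at hm ⊢
  linear_combination ht + (2 * e * x - (e * m + f / 2) + f) * hm

lemma mem_Ioo_of_mul_quadratic_neg (he : e ≠ 0) (hD : 0 ≤ discrim e f h)
    (hx : e * (e * (x * x) + f * x + h) < 0) : x ∈ Ioo (lowerRoot e f h) (upperRoot e f h) := by
  rw [mul_quadratic_eq he hD] at hx
  rcases mul_neg_iff.1 (neg_of_mul_neg_right hx (sq_nonneg e)) with ⟨h1, h2⟩ | ⟨h1, h2⟩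
  · exact ⟨by linarith, by linarith⟩
  · linarith [lowerRoot_le_upperRoot (e := e) (f := f) (h := h)]

lemma mem_Icc_of_mul_quadratic_nonpos (he : e ≠ 0) (hD : 0 ≤ discrim e f h)
    (hx : e * (e * (x * x) + f * x + h) ≤ 0) : x ∈ Icc (lowerRoot e f h) (upperRoot e f h) := by
  rw [mul_quadratic_eq he hD] at hx
  have hlu : lowerRoot e f h ≤ upperRoot e f h := lowerRoot_le_upperRoot
  rcases mul_nonpos_iff.1 (nonpos_of_mul_nonpos_right hx (sq_pos_of_ne_zero he)) with
    ⟨h1, h2⟩ | ⟨h1, h2⟩ <;> exact ⟨by linarith, by linarith⟩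

lemma lt_lowerRoot_or_upperRoot_lt_of_mul_quadratic_pos (he : e ≠ 0) (hD : 0 ≤ discrim e f h)
    (hx : 0 < e * (e * (x * x) + f * x + h)) : x < lowerRoot e f h ∨ upperRoot e f h < x := by
  rw [mul_quadratic_eq he hD] at hx
  rcases mul_pos_iff.1 (pos_of_mul_pos_right hx (sq_nonneg e)) with ⟨h1, h2⟩ | ⟨h1, h2⟩
  · exact Or.inr (by linarith)
  · exact Or.inl (by linarith)

end QuadraticRoots

open QuadraticRoots

section

variable {a b c d s x : ℝ}

lemma discrim_g_eq : discrim (1 - a) (-(b + c)) (-d) = (b + c) ^ 2 + 4 * d * (1 - a) := by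
  rw [discrim]; ring

lemma lowerRoot_g : lowerRoot (1 - a) (-(b + c)) (-d) =
    (b + c) / (2 * (1 - a)) - √((b + c) ^ 2 + 4 * d * (1 - a)) / (2 * |1 - a|) := by
  rw [lowerRoot, discrim_g_eq, neg_neg]

lemma upperRoot_g : upperRoot (1 - a) (-(b + c)) (-d) =
    (b + c) / (2 * (1 - a)) + √((b + c) ^ 2 + 4 * d * (1 - a)) / (2 * |1 - a|) := by
  rw [upperRoot, discrim_g_eq, neg_neg]

lemma deltaDisc_pos (ha : 0 < a) (hc : 0 < c) (had : a * d ≤ b * c) :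
    0 < -a ^ 2 * d + a * b * c + c ^ 2 := by
  nlinarith [mul_nonneg ha.le (sub_nonneg.2 had)]

lemma gDisc_pos (hd : 0 < d) (had : a * d ≤ b * c) : 0 < (b + c) ^ 2 + 4 * d * (1 - a) := by
  nlinarith [sq_nonneg (b - c)]

lemma lowerDeltaRoot_lt_neg_div (ha : 0 < a) (hc : 0 < c) (hs : 0 ≤ s) :
    (-(a * b) - 2 * c - 2 * s) / a ^ 2 < -b / a := by
  rw [div_lt_div_iff₀ (by positivity) ha]
  nlinarith [mul_pos ha hc, mul_nonneg ha.le hs]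

lemma upperDeltaRoot_eq (ha : a ≠ 0) :
    (-(a * b) - 2 * c + 2 * s) / a ^ 2 = -b / a + 2 * (s - c) / a ^ 2 := by
  field_simp; ring

lemma upperDeltaRoot_neg (ha : 0 < a) (hb : 0 < b) (hc : 0 < c) (hd : 0 < d) :
    (-(a * b) - 2 * c + 2 * √(-a ^ 2 * d + a * b * c + c ^ 2)) / a ^ 2 < 0 := by
  have hs : √(-a ^ 2 * d + a * b * c + c ^ 2) < (a * b + 2 * c) / 2 := by
    rw [Real.sqrt_lt' (by positivity)]
    nlinarith [mul_pos (mul_pos ha ha) hd, sq_nonneg (a * b)]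
  exact div_neg_of_neg_of_pos (by linarith) (by positivity)

lemma four_mul_g_eq_sq (ha : a ≠ 0) (hs : s ^ 2 = -a ^ 2 * d + a * b * c + c ^ 2)
    (hx : x = (-(a * b) - 2 * c + 2 * s) / a ^ 2) :
    4 * ((1 - a) * (x * x) + -(b + c) * x + -d) = ((2 - a) * x - b) ^ 2 := by
  subst hx
  field_simp
  linear_combination (-4 * a ^ 2) * hs

lemma lt_lowerRoot_g_of_lt_one (ha1 : a < 1) (hd : 0 < d)
    (hD : 0 ≤ discrim (1 - a) (-(b + c)) (-d)) (hx : x < 0)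
    (hgx : 0 < (1 - a) * (x * x) + -(b + c) * x + -d) :
    x < lowerRoot (1 - a) (-(b + c)) (-d) ∧ lowerRoot (1 - a) (-(b + c)) (-d) < 0 := by
  have he : 1 - a ≠ 0 := by linarith
  have h0 := mem_Ioo_of_mul_quadratic_neg (x := 0) he hD (by nlinarith)
  rcases lt_lowerRoot_or_upperRoot_lt_of_mul_quadratic_pos he hD
    (mul_pos (by linarith) hgx) with h | h
  · exact ⟨h, h0.1⟩
  · linarith [h0.2]

lemma lt_upperRoot_g_of_one_lt (ha1 : 1 < a) (hd : 0 < d)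
    (hD : 0 ≤ discrim (1 - a) (-(b + c)) (-d)) (hx : x < 0)
    (hgx : 0 < (1 - a) * (x * x) + -(b + c) * x + -d) :
    x < upperRoot (1 - a) (-(b + c)) (-d) ∧ upperRoot (1 - a) (-(b + c)) (-d) < 0 := by
  have he : 1 - a ≠ 0 := by linarith
  have hx' := mem_Ioo_of_mul_quadratic_neg he hD (mul_neg_of_neg_of_pos (by linarith) hgx)
  rcases lt_lowerRoot_or_upperRoot_lt_of_mul_quadratic_pos (x := 0) he hD
    (by nlinarith) with h | h
  · linarith [hx'.1]
  · exact ⟨hx'.2, h⟩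

lemma lowerRoot_g_le_of_one_lt (ha1 : 1 < a) (hD : 0 ≤ discrim (1 - a) (-(b + c)) (-d))
    (hgx : 0 ≤ (1 - a) * (x * x) + -(b + c) * x + -d) :
    lowerRoot (1 - a) (-(b + c)) (-d) ≤ x :=
  (mem_Icc_of_mul_quadratic_nonpos (by linarith) hD
    (mul_nonpos_of_nonpos_of_nonneg (by linarith) hgx)).1

lemma root_bounds_of_le (ha : 0 < a) (hb : 0 < b) (hc : 0 < c) (hd : 0 < d)
    (had : a * d ≤ b * c) {xdm xdp xgm xgp u v : ℝ}
    (hxdm : xdm = (-(a * b) - 2 * c - 2 * √(-a ^ 2 * d + a * b * c + c ^ 2)) / a ^ 2)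
    (hxdp : xdp = (-(a * b) - 2 * c + 2 * √(-a ^ 2 * d + a * b * c + c ^ 2)) / a ^ 2)
    (hxgm : xgm = if a = 1 then -d / (b + c)
      else (b + c) / (2 * (1 - a)) - √((b + c) ^ 2 + 4 * d * (1 - a)) / (2 * |1 - a|))
    (hxgp : xgp = if a = 1 then -d / (b + c)
      else (b + c) / (2 * (1 - a)) + √((b + c) ^ 2 + 4 * d * (1 - a)) / (2 * |1 - a|))
    (hu : u = if a ≤ 2 then xdm else xgm) (hv : v = if a ≤ 1 then xgm else xgp) :
    u ≤ xdm ∧ xdp < v ∧ v < 0 := by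
  rw [← lowerRoot_g] at hxgm
  rw [← upperRoot_g] at hxgp
  set s := √(-a ^ 2 * d + a * b * c + c ^ 2)
  have hs : s ^ 2 = _ := Real.sq_sqrt (deltaDisc_pos ha hc had).le
  have hD : 0 ≤ discrim (1 - a) (-(b + c)) (-d) := discrim_g_eq ▸ (gDisc_pos hd had).le
  have hxdp_neg : xdp < 0 := hxdp ▸ upperDeltaRoot_neg ha hb hc hd
  have hxdp_ge : -b / a ≤ xdp := by
    have hcs : c ≤ s := Real.le_sqrt_of_sq_le (by nlinarith)
    rw [hxdp, upperDeltaRoot_eq ha.ne', le_add_iff_nonneg_right]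
    exact div_nonneg (by linarith) (by positivity)
  have hg_xdp : 0 < (1 - a) * (xdp * xdp) + -(b + c) * xdp + -d := by
    have := four_mul_g_eq_sq ha.ne' hs hxdp
    nlinarith [(div_le_iff₀ ha).1 hxdp_ge]
  have hg_xdm : 0 ≤ (1 - a) * (xdm * xdm) + -(b + c) * xdm + -d := by
    have := four_mul_g_eq_sq (b := b) (c := c) (d := d) (s := -s) (x := xdm) ha.ne'
      (by rw [neg_sq, hs]) (by rw [hxdm]; ring)
    nlinarith [sq_nonneg ((2 - a) * xdm - b)]
  rcases lt_trichotomy a 1 with ha1 | rfl | ha1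
  · rw [hu, if_pos (by linarith), hv, if_pos ha1.le, hxgm, if_neg ha1.ne]
    exact ⟨le_rfl, lt_lowerRoot_g_of_lt_one ha1 hd hD hxdp_neg hg_xdp⟩
  · rw [hu, if_pos (by norm_num), hv, if_pos le_rfl, hxgm, if_pos rfl, lt_div_iff₀ (by linarith)]
    refine ⟨le_rfl, by linarith, div_neg_of_neg_of_pos (by linarith) (by linarith)⟩
  · rw [hv, if_neg (by linarith), hxgp, if_neg ha1.ne']
    refine ⟨?_, lt_upperRoot_g_of_one_lt ha1 hd hD hxdp_neg hg_xdp⟩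
    rw [hu]
    split_ifs
    · exact le_rfl
    · rw [hxgm, if_neg ha1.ne']
      exact lowerRoot_g_le_of_one_lt ha1 hD hg_xdm

end

theorem stmt_11_general (a b c d : ℝ) (ha : 0 < a) (hb : 0 < b) (hc : 0 < c) (hd : 0 < d)
    (DD Dg : ℝ)
    (hDD : DD = -a ^ 2 * d + a * b * c + c ^ 2)
    (hDg : Dg = (b + c) ^ 2 + 4 * d * (1 - a))
    (xdm xdp xgm xgp u v : ℝ)
    (hxdm : xdm = (-(a * b) - 2 * c - 2 * Real.sqrt DD) / a ^ 2)
    (hxdp : xdp = (-(a * b) - 2 * c + 2 * Real.sqrt DD) / a ^ 2)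
    (hxgm : xgm = if a = 1 then -d / (b + c)
      else (b + c) / (2 * (1 - a)) - Real.sqrt Dg / (2 * |1 - a|))
    (hxgp : xgp = if a = 1 then -d / (b + c)
      else (b + c) / (2 * (1 - a)) + Real.sqrt Dg / (2 * |1 - a|))
    (hu : u = if a ≤ 2 then xdm else xgm)
    (hv : v = if a ≤ 1 then xgm else xgp) :
    (a * d < b * c →
      0 < DD ∧ 0 < Dg ∧
      u ≤ xdm ∧ xdm < -b / a ∧ -b / a < xdp ∧ xdp < v ∧ v < 0) ∧
    (a * d = b * c →
      u < -b / a ∧ -b / a = xdp ∧ xdp < v ∧ v < 0) := by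
  subst hDD hDg
  have bounds (had : a * d ≤ b * c) :=
    root_bounds_of_le ha hb hc hd had hxdm hxdp hxgm hxgp hu hv
  have hxdm_lt : xdm < -b / a := hxdm ▸ lowerDeltaRoot_lt_neg_div ha hc (Real.sqrt_nonneg _)
  rw [upperDeltaRoot_eq ha.ne'] at hxdp
  refine ⟨fun had => ?_, fun had => ?_⟩
  · have hcs : c < √(-a ^ 2 * d + a * b * c + c ^ 2) := (Real.lt_sqrt hc.le).2 (by nlinarith)
    have hxdp_gt : -b / a < xdp := by
      rw [hxdp]
      exact lt_add_of_pos_right _ (div_pos (by linarith) (by positivity))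
    obtain ⟨hu, hv⟩ := bounds had.le
    exact ⟨deltaDisc_pos ha hc had.le, gDisc_pos hd had.le, hu, hxdm_lt, hxdp_gt, hv⟩
  · have hsc : √(-a ^ 2 * d + a * b * c + c ^ 2) = c := by
      rw [show -a ^ 2 * d + a * b * c + c ^ 2 = c ^ 2 by linear_combination (-a) * had]
      exact Real.sqrt_sq hc.le
    obtain ⟨hu, hv⟩ := bounds had.le
    exact ⟨hu.trans_lt hxdm_lt, by rw [hxdp, hsc, sub_self, mul_zero, zero_div, add_zero], hv⟩

/-- If `a*d < b*c`, then `ΔΔ > 0`, `Δg > 0`, and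
`u ≤ xΔ⁻ < -b/a < xΔ⁺ < v < 0`. If `a*d = b*c`, then
`u < -b/a = xΔ⁺ < v < 0`. -/
theorem stmt_11 (a b c d : ℝ) (ha : 0 < a) (hb : 0 < b) (hc : 0 < c) (hd : 0 < d)
    (W : ℕ → Polynomial ℝ)
    (hW0 : W 0 = 1) (hW1 : W 1 = X)
    (hW : ∀ n : ℕ, W (n + 2) = (C a * X + C b) * W (n + 1) + (C c * X + C d) * W n)
    (DD Dg : ℝ)
    (hDD : DD = -a ^ 2 * d + a * b * c + c ^ 2)
    (hDg : Dg = (b + c) ^ 2 + 4 * d * (1 - a))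
    (xdm xdp xgm xgp u v : ℝ)
    (hxdm : xdm = (-(a * b) - 2 * c - 2 * Real.sqrt DD) / a ^ 2)
    (hxdp : xdp = (-(a * b) - 2 * c + 2 * Real.sqrt DD) / a ^ 2)
    (hxgm : xgm = if a = 1 then -d / (b + c)
      else (b + c) / (2 * (1 - a)) - Real.sqrt Dg / (2 * |1 - a|))
    (hxgp : xgp = if a = 1 then -d / (b + c)
      else (b + c) / (2 * (1 - a)) + Real.sqrt Dg / (2 * |1 - a|))
    (hu : u = if a ≤ 2 then xdm else xgm)
    (hv : v = if a ≤ 1 then xgm else xgp) :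
    (a * d < b * c →
      0 < DD ∧ 0 < Dg ∧
      u ≤ xdm ∧ xdm < -b / a ∧ -b / a < xdp ∧ xdp < v ∧ v < 0) ∧
    (a * d = b * c →
      u < -b / a ∧ -b / a = xdp ∧ xdp < v ∧ v < 0) :=
  stmt_11_general a b c d ha hb hc hd DD Dg hDD hDg xdm xdp xgm xgp u v hxdm hxdp hxgm hxgp hu hv
end

section
/- Suppose ad = bc. Then for every n ≥ 0 the polynomial (az + b)^⌊n/2⌋ divides W_n(z) in ℝ[z]. -/
open Polynomial

/-- If `a * d = b * c`, then `(a z + b)^⌊n/2⌋` divides `W n` in `ℝ[z]`. -/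
theorem stmt_14 (a b c d : ℝ) (ha : 0 < a) (hb : 0 < b) (hc : 0 < c) (hd : 0 < d)
    (W : ℕ → Polynomial ℝ)
    (hW0 : W 0 = 1) (hW1 : W 1 = X)
    (hW : ∀ n : ℕ, W (n + 2) = (C a * X + C b) * W (n + 1) + (C c * X + C d) * W n)
    (had : a * d = b * c) :
    ∀ n : ℕ, (C a * X + C b) ^ (n / 2) ∣ W n := by
  have hfac : C c * X + C d = C (c / a) * (C a * X + C b) := by
    have hd' : d = c / a * b := by field_simp; linarith [had]
    have hc' : (c : ℝ) = c / a * a := by field_simp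
    have h2 : C (c / a) * (C a * X + C b) = C (c / a * a) * X + C (c / a * b) := by
      rw [C_mul, C_mul]; ring
    rw [h2, ← hc', ← hd']
  intro n
  induction n using Nat.strong_induction_on with
  | _ n ih =>
    match n with
    | 0 => simp [hW0]
    | 1 => simp [hW1]
    | (m + 2) =>
      have h1 : (C a * X + C b) ^ (m / 2) ∣ W (m + 1) := by
        refine dvd_trans (pow_dvd_pow _ ?_) (ih (m + 1) (by omega))
        omega
      have h0 := ih m (by omega)
      have : (m + 2) / 2 = m / 2 + 1 := by omega
      rw [this, hW m, hfac]
      have : (C a * X + C b) * W (m + 1) + C (c / a) * (C a * X + C b) * W m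
          = (C a * X + C b) * (W (m + 1) + C (c / a) * W m) := by ring
      rw [this, pow_succ, mul_comm ((C a * X + C b) ^ (m / 2))]
      exact mul_dvd_mul dvd_rfl (dvd_add h1 (Dvd.dvd.mul_left h0 _))
end

section
/- Suppose ad > bc and Δ_Δ ≥ 0. Then for every integer n ≥ 0: if h(x_Δ^+) ≤ 0, or if h(x_Δ^+) > 0 and n < n^+, then (−1)^n · W_n(x_Δ^+) > 0; if h(x_Δ^+) > 0 and n = n^+, then W_n(x_Δ^+) = 0; and if h(x_Δ^+) > 0 and n > n^+, then (−1)^{n+1} · W_n(x_Δ^+) > 0. -/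
open Polynomial

/-- Sign of `W n` at `xΔ⁺` when `a*d > b*c` and `ΔΔ ≥ 0`. Here
`h(z) = (2 - a) z - b`, `A(z) = a z + b` and `n⁺ = -A(xΔ⁺)/h(xΔ⁺)`. -/
theorem stmt_16 (a b c d : ℝ) (ha : 0 < a) (hb : 0 < b) (hc : 0 < c) (hd : 0 < d)
    (W : ℕ → Polynomial ℝ)
    (hW0 : W 0 = 1) (hW1 : W 1 = X)
    (hW : ∀ n : ℕ, W (n + 2) = (C a * X + C b) * W (n + 1) + (C c * X + C d) * W n)
    (DD : ℝ) (hDD : DD = -a ^ 2 * d + a * b * c + c ^ 2)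
    (xdp : ℝ) (hxdp : xdp = (-(a * b) - 2 * c + 2 * Real.sqrt DD) / a ^ 2)
    (nplus : ℝ) (hnplus : nplus = -(a * xdp + b) / ((2 - a) * xdp - b))
    (had : b * c < a * d) (hDD0 : 0 ≤ DD) :
    ∀ n : ℕ,
      (((2 - a) * xdp - b ≤ 0 ∨ (0 < (2 - a) * xdp - b ∧ (n : ℝ) < nplus)) →
        0 < (-1 : ℝ) ^ n * (W n).eval xdp) ∧
      ((0 < (2 - a) * xdp - b ∧ (n : ℝ) = nplus) → (W n).eval xdp = 0) ∧
      ((0 < (2 - a) * xdp - b ∧ nplus < (n : ℝ)) →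
        0 < (-1 : ℝ) ^ (n + 1) * (W n).eval xdp) := by
  have ha2 : (a:ℝ)^2 ≠ 0 := by positivity
  have hsq : Real.sqrt DD ^ 2 = DD := Real.sq_sqrt hDD0
  have h1 : a^2 * xdp = -(a*b) - 2*c + 2*Real.sqrt DD := by
    rw [hxdp]; field_simp
  have hE : (a^2*xdp + a*b + 2*c)^2 = 4*DD := by
    have h2 : a^2*xdp + a*b + 2*c = 2*Real.sqrt DD := by linarith
    rw [h2]; linear_combination 4*hsq
  have hB' : a^2 * ((a*xdp+b)^2 + 4*(c*xdp+d)) = 0 := by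
    linear_combination hE + 4*hDD
  have hB : (a*xdp+b)^2 + 4*(c*xdp+d) = 0 :=
    (mul_eq_zero.mp hB').resolve_left ha2
  have hsc : Real.sqrt DD < c := by
    rw [Real.sqrt_lt' hc]; nlinarith
  have hA : a*xdp + b < 0 := by
    have h3 : a^2*(a*xdp+b) = 2*a*(Real.sqrt DD - c) := by linear_combination a*h1
    nlinarith
  -- key formula
  have key : ∀ n : ℕ, 2^n * (a*xdp+b) * (W n).eval xdp
      = ((a*xdp+b) + (n:ℝ)*((2-a)*xdp-b)) * (a*xdp+b)^n := by
    intro n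
    induction n using Nat.twoStepInduction with
    | zero => simp [hW0]
    | one => simp [hW1]; ring
    | more n ih1 ih2 =>
      rw [hW n]
      simp only [eval_add, eval_mul, eval_C, eval_X]
      push_cast
      push_cast at ih1 ih2
      linear_combination (2*(a*xdp+b)) * ih2 + (4*(c*xdp+d)) * ih1
        + (((a*xdp+b) + (n:ℝ)*((2-a)*xdp-b)) * (a*xdp+b)^n) * hB
  intro n
  have hk := key n
  have hnA : 0 < -(a*xdp+b) := by linarith
  have hpow : 0 < (-(a*xdp+b))^n := pow_pos hnA n
  have hden : 0 < 2^n * (-(a*xdp+b)) := by positivity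
  have hkey2 : (-1:ℝ)^n * (W n).eval xdp * (2^n * (-(a*xdp+b)))
      = (-((a*xdp+b) + (n:ℝ)*((2-a)*xdp-b))) * (-(a*xdp+b))^n := by
    have hnp : (-(a*xdp+b))^n = (-1:ℝ)^n * (a*xdp+b)^n := by rw [neg_pow]
    linear_combination (-(-1:ℝ)^n) * hk
      + ((a*xdp+b) + (n:ℝ)*((2-a)*xdp-b)) * hnp
  have hval : (-1:ℝ)^n * (W n).eval xdp
      = (-((a*xdp+b) + (n:ℝ)*((2-a)*xdp-b))) * (-(a*xdp+b))^n / (2^n * (-(a*xdp+b))) :=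
    (eq_div_iff (ne_of_gt hden)).mpr hkey2
  refine ⟨?_, ?_, ?_⟩
  · intro hcase
    have hlin : (a*xdp+b) + (n:ℝ)*((2-a)*xdp-b) < 0 := by
      rcases hcase with h1' | ⟨h1', h2'⟩
      · have : (0:ℝ) ≤ (n:ℝ) := Nat.cast_nonneg n
        nlinarith
      · rw [hnplus] at h2'
        have := (lt_div_iff₀ h1').mp h2'
        linarith
    rw [hval]
    exact div_pos (mul_pos (by linarith) hpow) hden
  · rintro ⟨h1', h2'⟩
    rw [hnplus] at h2'
    have hz : (a*xdp+b) + (n:ℝ)*((2-a)*xdp-b) = 0 := by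
      have := (eq_div_iff (ne_of_gt h1')).mp h2'
      linarith
    rw [hz, zero_mul] at hk
    have h2n : (2:ℝ)^n * (a*xdp+b) ≠ 0 := by
      have : (0:ℝ) < 2^n := by positivity
      exact mul_ne_zero (ne_of_gt this) (ne_of_lt hA)
    exact (mul_eq_zero.mp hk).resolve_left h2n
  · rintro ⟨h1', h2'⟩
    have hlin : 0 < (a*xdp+b) + (n:ℝ)*((2-a)*xdp-b) := by
      rw [hnplus] at h2'
      have := (div_lt_iff₀ h1').mp h2'
      linarith
    have hneg : (-1:ℝ)^n * (W n).eval xdp < 0 := by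
      rw [hval]
      exact div_neg_of_neg_of_pos (mul_neg_of_neg_of_pos (by linarith) hpow) hden
    have : (-1:ℝ)^(n+1) * (W n).eval xdp = -((-1:ℝ)^n * (W n).eval xdp) := by
      rw [pow_succ]; ring
    rw [this]
    linarith
end

section
/- Suppose ad > bc and Δ_Δ ≥ 0. Then h(x_Δ^+) > 0 holds if and only if both Δ_g > Δ_Δ and −ab + ac − 2c > 0 hold. -/
open Polynomial

/-- If `a*d > b*c` and `ΔΔ ≥ 0`, then `h(xΔ⁺) > 0` if and only if both
`Δg > ΔΔ` and `-ab + ac - 2c > 0`. -/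
theorem stmt_17 (a b c d : ℝ) (ha : 0 < a) (hb : 0 < b) (hc : 0 < c) (hd : 0 < d)
    (W : ℕ → Polynomial ℝ)
    (hW0 : W 0 = 1) (hW1 : W 1 = X)
    (hW : ∀ n : ℕ, W (n + 2) = (C a * X + C b) * W (n + 1) + (C c * X + C d) * W n)
    (DD Dg : ℝ)
    (hDD : DD = -a ^ 2 * d + a * b * c + c ^ 2)
    (hDg : Dg = (b + c) ^ 2 + 4 * d * (1 - a))
    (xdp : ℝ) (hxdp : xdp = (-(a * b) - 2 * c + 2 * Real.sqrt DD) / a ^ 2)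
    (had : b * c < a * d) (hDD0 : 0 ≤ DD) :
    0 < (2 - a) * xdp - b ↔ (DD < Dg ∧ 0 < -(a * b) + a * c - 2 * c) := by
  have ha2 : (0:ℝ) < a ^ 2 := by positivity
  set s := Real.sqrt DD with hsdef
  have hs0 : 0 ≤ s := Real.sqrt_nonneg _
  have hs2 : s ^ 2 = DD := Real.sq_sqrt hDD0
  subst hDD hDg hxdp
  have hsc : s ≤ c := by
    nlinarith [mul_pos ha (sub_pos.2 had), sq_nonneg (s - c)]
  set P : ℝ := -(a * b) + a * c - 2 * c with hPdef
  have hkey : P ^ 2 - (2 - a) ^ 2 * s ^ 2 =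
      a ^ 2 * (((b + c) ^ 2 + 4 * d * (1 - a)) - (-a ^ 2 * d + a * b * c + c ^ 2)) := by
    rw [hs2, hPdef]; ring
  have hrw : (2 - a) * ((-(a * b) - 2 * c + 2 * s) / a ^ 2) - b
      = 2 * ((2 - a) * s + P) / a ^ 2 := by
    field_simp
    ring
  rw [hrw, lt_div_iff₀ ha2, zero_mul]
  constructor
  · intro h
    have ha3 : 2 < a := by
      by_contra h2
      push_neg at h2
      nlinarith [mul_nonneg (sub_nonneg.2 h2) (sub_nonneg.2 hsc), mul_pos ha hb]
    have hP : 0 < P := by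
      nlinarith [mul_nonneg (le_of_lt (sub_pos.2 ha3)) hs0]
    refine ⟨?_, hP⟩
    have hps : (a - 2) * s < P := by nlinarith
    have hps0 : 0 ≤ (a - 2) * s := mul_nonneg (by linarith) hs0
    nlinarith [hkey, mul_self_lt_mul_self hps0 hps]
  · rintro ⟨h1, h2⟩
    nlinarith [hkey, sq_nonneg ((2 - a) * s + P), mul_pos ha2 (sub_pos.2 h1)]
end

section
/- Suppose ad > bc, Δ_Δ ≥ 0, and h(x_Δ^+) > 0. Then for every integer n with n ≥ n^+, the polynomial W_n has at least two distinct real roots. -/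
open Polynomial Filter

private lemma ivt_root {p : ℝ[X]} {x1 x2 : ℝ} (h12 : x1 < x2)
    (h1 : eval x1 p < 0) (h2 : 0 < eval x2 p) :
    ∃ r, x1 < r ∧ r < x2 ∧ p.IsRoot r := by
  have hc : ContinuousOn (fun x => eval x p) (Set.Icc x1 x2) :=
    (p.continuous).continuousOn
  have h0 : (0:ℝ) ∈ Set.Ioo (eval x1 p) (eval x2 p) := ⟨h1, h2⟩
  obtain ⟨r, hr, hr0⟩ := intermediate_value_Ioo h12.le hc h0
  exact ⟨r, hr.1, hr.2, hr0⟩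

private lemma ivt_root' {p : ℝ[X]} {x1 x2 : ℝ} (h12 : x1 < x2)
    (h1 : 0 < eval x1 p) (h2 : eval x2 p < 0) :
    ∃ r, x1 < r ∧ r < x2 ∧ p.IsRoot r := by
  have hc : ContinuousOn (fun x => eval x p) (Set.Icc x1 x2) :=
    (p.continuous).continuousOn
  have h0 : (0:ℝ) ∈ Set.Ioo (eval x2 p) (eval x1 p) := ⟨h2, h1⟩
  obtain ⟨r, hr, hr0⟩ := intermediate_value_Ioo' h12.le hc h0
  exact ⟨r, hr.1, hr.2, hr0⟩

private lemma neg_left_of_deriv_pos (p : ℝ[X]) (x0 : ℝ) (h0 : eval x0 p = 0)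
    (hd : 0 < eval x0 (derivative p)) : ∃ y, y < x0 ∧ eval y p < 0 := by
  have H := p.hasDerivAt x0
  rw [hasDerivAt_iff_tendsto_slope] at H
  have H2 : Tendsto (slope (fun x => eval x p) x0) (nhdsWithin x0 (Set.Iio x0))
      (nhds (eval x0 (derivative p))) :=
    H.mono_left (nhdsWithin_mono _ (fun z hz => ne_of_lt hz))
  have H3 : ∀ᶠ z in nhdsWithin x0 (Set.Iio x0),
      0 < slope (fun x => eval x p) x0 z := H2.eventually (eventually_gt_nhds hd)
  have H4 : ∀ᶠ z in nhdsWithin x0 (Set.Iio x0), z < x0 :=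
    eventually_mem_nhdsWithin.mono (fun z hz => hz)
  obtain ⟨z, hz1, hz2⟩ := (H3.and H4).exists
  refine ⟨z, hz2, ?_⟩
  rw [slope_def_field] at hz1
  simp only [h0] at hz1
  rcases div_pos_iff.mp hz1 with ⟨hn, hden⟩ | ⟨hn, hden⟩
  · linarith
  · linarith

private lemma key_ineq (s t L c n : ℝ) (ht : t < 0) (hL : 0 < L) (hs : 0 ≤ s)
    (hcs : s < c) (hb : 4*t^2 < (c - s) * (-(2*t) - L)) (hnL : n * L = -(2*t)) :
    (12*t^2 - 6*t*s + 3*L*c - L*s) + (6*t*s - 3*L*c) * n + (L*s) * n^2 < 0 := by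
  set u : ℝ := -t with hu_def
  have hu : 0 < u := by simp [hu_def]; linarith
  have hb' : 4*u^2 < (c - s) * (2*u - L) := by rw [hu_def]; nlinarith [hb]
  have hnL' : n * L = 2*u := by rw [hu_def]; linarith
  have h2uL : 0 < 2*u - L := by nlinarith
  have hE : 12*u^2*L + 6*u*s*L - s*L^2 - 8*u^2*s + 3*c*L*(L-2*u) < 0 := by
    nlinarith [mul_lt_mul_of_pos_left hb' (by positivity : (0:ℝ) < 3*L*(2*u-L)),
      mul_nonneg (mul_nonneg hs (sq_nonneg (2*u-L))) (by linarith : (0:ℝ) ≤ 2*u+L)]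
  have key : L^2 * ((12*u^2 + 6*u*s + 3*L*c - L*s) + (-6*u*s - 3*L*c) * n + (L*s) * n^2)
      = L * (12*u^2*L + 6*u*s*L - s*L^2 - 8*u^2*s + 3*c*L*(L-2*u)) := by
    linear_combination ((-6*u*s - 3*L*c)*L + L*s*(n*L + 2*u)) * hnL'
  have hG : (12*u^2 + 6*u*s + 3*L*c - L*s) + (-6*u*s - 3*L*c) * n + (L*s) * n^2 < 0 := by
    nlinarith [mul_pos hL (neg_pos.mpr hE), mul_pos hL hL]
  rw [hu_def] at hG
  nlinarith [hG]

private lemma step_deg (a b c d : ℝ) (ha : a ≠ 0) {p q : ℝ[X]} {m : ℕ}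
    (hp : p.natDegree = m + 1) (hpc : p.coeff (m+1) = a ^ m) (hq : q.natDegree ≤ m) :
    ((C a * X + C b) * p + (C c * X + C d) * q).natDegree = m + 2 ∧
    ((C a * X + C b) * p + (C c * X + C d) * q).coeff (m+2) = a ^ (m+1) := by
  have hp2 : p.coeff (m+2) = 0 := coeff_eq_zero_of_natDegree_lt (by omega)
  have hq1 : q.coeff (m+1) = 0 := coeff_eq_zero_of_natDegree_lt (by omega)
  have hq2 : q.coeff (m+2) = 0 := coeff_eq_zero_of_natDegree_lt (by omega)
  have hco : ((C a * X + C b) * p + (C c * X + C d) * q).coeff (m+2) = a ^ (m+1) := by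
    rw [add_mul, add_mul, coeff_add, coeff_add, coeff_add, mul_assoc, mul_assoc,
      coeff_C_mul, coeff_C_mul, coeff_C_mul, coeff_C_mul,
      show m + 2 = (m+1) + 1 from rfl, coeff_X_mul, coeff_X_mul]
    rw [hpc, hp2, hq1, hq2]
    ring
  have hle : ((C a * X + C b) * p + (C c * X + C d) * q).natDegree ≤ m + 2 := by
    refine le_trans (natDegree_add_le _ _) (max_le ?_ ?_)
    · exact le_trans (natDegree_mul_le) (by
        have := natDegree_linear_le (a := a) (b := b); omega)
    · exact le_trans (natDegree_mul_le) (by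
        have := natDegree_linear_le (a := c) (b := d); omega)
  have hne : ((C a * X + C b) * p + (C c * X + C d) * q).coeff (m+2) ≠ 0 := by
    rw [hco]; exact pow_ne_zero _ ha
  exact ⟨le_antisymm hle (le_natDegree_of_ne_zero hne), hco⟩

set_option maxHeartbeats 4000000 in
/-- If `a*d > b*c`, `ΔΔ ≥ 0` and `h(xΔ⁺) > 0`, then for every `n ≥ n⁺` the
polynomial `W n` has at least two distinct real roots. -/
theorem stmt_18 (a b c d : ℝ) (ha : 0 < a) (hb : 0 < b) (hc : 0 < c) (hd : 0 < d)
    (W : ℕ → Polynomial ℝ)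
    (hW0 : W 0 = 1) (hW1 : W 1 = X)
    (hW : ∀ n : ℕ, W (n + 2) = (C a * X + C b) * W (n + 1) + (C c * X + C d) * W n)
    (DD : ℝ) (hDD : DD = -a ^ 2 * d + a * b * c + c ^ 2)
    (xdp : ℝ) (hxdp : xdp = (-(a * b) - 2 * c + 2 * Real.sqrt DD) / a ^ 2)
    (nplus : ℝ) (hnplus : nplus = -(a * xdp + b) / ((2 - a) * xdp - b))
    (had : b * c < a * d) (hDD0 : 0 ≤ DD)
    (hh : 0 < (2 - a) * xdp - b) :
    ∀ n : ℕ, nplus ≤ (n : ℝ) →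
      ∃ x y : ℝ, x ≠ y ∧ (W n).IsRoot x ∧ (W n).IsRoot y := by
  intro n hn
  set s : ℝ := Real.sqrt DD with hsdef
  have hs0 : 0 ≤ s := Real.sqrt_nonneg DD
  have hs2 : s^2 = -a^2*d + a*b*c + c^2 := by
    rw [hsdef, Real.sq_sqrt hDD0, hDD]
  have hs2c : s^2 < c^2 := by nlinarith [mul_pos ha (sub_pos.mpr had)]
  have hsc : s < c := by nlinarith [hs2c, hs0]
  have e1 : a^2*xdp = -(a*b) - 2*c + 2*s := by
    rw [hxdp]; field_simp
  set t : ℝ := (a*xdp+b)/2 with htdef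
  set L : ℝ := (2-a)*xdp - b with hLdef
  have hA2t : a*xdp + b = 2*t := by rw [htdef]; ring
  have hat : a*t = s - c := by rw [htdef]; linear_combination e1/2
  have ht0 : t < 0 := by nlinarith
  have hxneg : xdp < 0 := by nlinarith
  have hBq : a^2*(4*(c*xdp+d) + (a*xdp+b)^2) = 0 := by
    linear_combination (a^2*xdp + a*b + 2*s + 2*c) * e1 + 4 * hs2
  have hB : c*xdp + d = -(t^2) := by
    have ha2 : (a:ℝ)^2 ≠ 0 := by positivity
    have h4 : 4*(c*xdp+d) + (a*xdp+b)^2 = 0 :=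
      (mul_eq_zero.mp hBq).resolve_left ha2
    rw [htdef]; linear_combination h4/4
  have hba : xdp < -(b/a) := by
    rw [lt_neg, div_lt_iff₀ ha]; nlinarith
  have hevalrec : ∀ (z : ℝ) (k : ℕ), (W (k+2)).eval z
      = (a*z+b) * (W (k+1)).eval z + (c*z+d) * (W k).eval z := by
    intro z k; rw [hW k]; simp only [eval_add, eval_mul, eval_C, eval_X]
  have hderivrec : ∀ (z : ℝ) (k : ℕ), (derivative (W (k+2))).eval z
      = (a*z+b) * (derivative (W (k+1))).eval z + a * (W (k+1)).eval z
        + (c*z+d) * (derivative (W k)).eval z + c * (W k).eval z := by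
    intro z k; rw [hW k]; simp [derivative_mul]; ring
  -- closed form for W at xdp
  have hWx : ∀ k : ℕ, 2*t*((W k).eval xdp) = (2*t + (k:ℝ)*L)*t^k := by
    have main : ∀ k : ℕ, (2*t*((W k).eval xdp) = (2*t + (k:ℝ)*L)*t^k) ∧
        (2*t*((W (k+1)).eval xdp) = (2*t + ((k+1:ℕ):ℝ)*L)*t^(k+1)) := by
      intro k
      induction k with
      | zero =>
        constructor
        · rw [hW0]; push_cast; simp
        · rw [hW1]; push_cast; simp only [eval_X, pow_one]
          rw [htdef, hLdef]; ring
      | succ k ih =>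
        refine ⟨ih.2, ?_⟩
        show 2*t*((W (k+2)).eval xdp) = (2*t + ((k+2:ℕ):ℝ)*L)*t^(k+2)
        rw [hevalrec xdp k, hA2t, hB]
        have h0 := ih.1
        have h1 := ih.2
        push_cast at h0 h1 ⊢
        linear_combination (2*t)*h1 - t^2*h0
    exact fun k => (main k).1
  -- closed form for derivative at xdp
  have hDx : ∀ k : ℕ, 12*t^3*((derivative (W k)).eval xdp)
      = (k:ℝ)*((12*t^2 - 6*t*s + 3*L*c - L*s) + (6*t*s - 3*L*c)*(k:ℝ)
          + (L*s)*(k:ℝ)^2)*t^k := by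
    have main : ∀ k : ℕ, (12*t^3*((derivative (W k)).eval xdp)
        = (k:ℝ)*((12*t^2 - 6*t*s + 3*L*c - L*s) + (6*t*s - 3*L*c)*(k:ℝ)
          + (L*s)*(k:ℝ)^2)*t^k) ∧
        (12*t^3*((derivative (W (k+1))).eval xdp)
        = ((k+1:ℕ):ℝ)*((12*t^2 - 6*t*s + 3*L*c - L*s) + (6*t*s - 3*L*c)*((k+1:ℕ):ℝ)
          + (L*s)*((k+1:ℕ):ℝ)^2)*t^(k+1)) := by
      intro k
      induction k with
      | zero =>
        constructor
        · rw [hW0]; push_cast; simp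
        · rw [hW1]; push_cast; simp only [derivative_X, eval_one, pow_one]
          ring
      | succ k ih =>
        refine ⟨ih.2, ?_⟩
        show 12*t^3*((derivative (W (k+2))).eval xdp)
          = ((k+2:ℕ):ℝ)*((12*t^2 - 6*t*s + 3*L*c - L*s) + (6*t*s - 3*L*c)*((k+2:ℕ):ℝ)
            + (L*s)*((k+2:ℕ):ℝ)^2)*t^(k+2)
        rw [hderivrec xdp k, hA2t, hB]
        have h0 := ih.1
        have h1 := ih.2
        have e0 := hWx k
        have e2 := hWx (k+1)
        push_cast at h0 h1 e0 e2 ⊢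
        linear_combination (2*t)*h1 - t^2*h0 + (6*t^2*a)*e2 + (6*t^2*c)*e0
          + (t^(k+2)*(12*t + 6*L + 6*(k:ℝ)*L))*hat
    exact fun k => (main k).1
  -- degrees and leading coefficients
  have hdeg : ∀ k : ℕ, (W k).natDegree ≤ k ∧ (W (k+1)).natDegree = k+1 ∧
      (W (k+1)).coeff (k+1) = a^k := by
    intro k
    induction k with
    | zero =>
      refine ⟨by rw [hW0]; simp, by rw [hW1]; simp, by rw [hW1]; simp⟩
    | succ k ih =>
      obtain ⟨h0, h1, h2⟩ := ih
      have hstep := step_deg a b c d (ne_of_gt ha) h1 h2 h0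
      rw [← hW k] at hstep
      exact ⟨le_of_eq h1, hstep.1, hstep.2⟩
  have hlcpos : ∀ k : ℕ, 0 < (W (k+1)).leadingCoeff := by
    intro k
    rw [leadingCoeff, (hdeg k).2.1, (hdeg k).2.2]
    positivity
  have hdegpos : ∀ k : ℕ, 0 < (W (k+1)).degree := by
    intro k
    rw [← natDegree_pos_iff_degree_pos, (hdeg k).2.1]; omega
  have htop : ∀ k : ℕ, Tendsto (fun x => eval x (W (k+1))) atTop atTop := fun k =>
    tendsto_atTop_of_leadingCoeff_nonneg _ (hdegpos k) (hlcpos k).le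
  -- far-left positivity for even degree
  have hbot : ∀ k : ℕ, Even (k+1) → ∀ᶠ x in atBot, 0 < eval x (W (k+1)) := by
    intro k hek
    set P : ℝ[X] := (W (k+1)).comp (-X) with hPdef
    have hnX : (-X : ℝ[X]).natDegree = 1 := by simp
    have hlcP : 0 < P.leadingCoeff := by
      rw [hPdef, leadingCoeff_comp (by rw [hnX]; omega)]
      have hX1 : (-X : ℝ[X]).leadingCoeff = -1 := by simp
      rw [hX1, (hdeg k).2.1, hek.neg_one_pow, mul_one]
      exact hlcpos k
    have hdPpos : 0 < P.degree := by
      rw [← natDegree_pos_iff_degree_pos, hPdef, natDegree_comp, hnX, (hdeg k).2.1]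
      omega
    have hT : Tendsto (fun x => eval x P) atTop atTop :=
      tendsto_atTop_of_leadingCoeff_nonneg _ hdPpos hlcP.le
    have hev : ∀ᶠ x in atTop, 0 < eval x P := hT.eventually_gt_atTop 0
    have := tendsto_neg_atBot_atTop.eventually hev
    refine this.mono (fun y hy => ?_)
    simpa [hPdef, eval_comp] using hy
  -- eval at 0
  have hz0 : ∀ k : ℕ, 0 ≤ (W k).eval 0 ∧ 0 ≤ (W (k+1)).eval 0 := by
    intro k
    induction k with
    | zero => exact ⟨by rw [hW0]; norm_num, by rw [hW1]; simp⟩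
    | succ k ih =>
      refine ⟨ih.2, ?_⟩
      show 0 ≤ (W (k+2)).eval 0
      rw [hevalrec 0 k]
      nlinarith [ih.1, ih.2]
  have hzeven : ∀ m : ℕ, 0 < (W (m+m)).eval 0 := by
    intro m
    induction m with
    | zero => show 0 < (W 0).eval 0; rw [hW0]; norm_num
    | succ m ih =>
      have hidx : m+1+(m+1) = (m+m)+2 := by omega
      rw [hidx, hevalrec 0 (m+m)]
      nlinarith [(hz0 (m+m)).2, ih]
  -- eval at -(b/a)
  have hzba : a * (-(b/a)) + b = 0 := by
    have : a * (b/a) = b := mul_div_cancel₀ b (ne_of_gt ha)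
    rw [mul_neg, this]; ring
  set K : ℝ := (a*d - b*c)/a with hKdef
  have hzbc : c * (-(b/a)) + d = K := by rw [hKdef]; field_simp; ring
  have hK : 0 < K := div_pos (by linarith) ha
  have hba2 : ∀ m : ℕ, (W (m+m)).eval (-(b/a)) = K^m ∧
      (W (m+m+1)).eval (-(b/a)) = -(b/a) * K^m := by
    intro m
    induction m with
    | zero =>
      constructor
      · show (W 0).eval _ = _; rw [hW0]; simp
      · show (W 1).eval _ = _; rw [hW1]; simp
    | succ m ih =>
      have hidx : m+1+(m+1) = (m+m)+2 := by omega
      have hidx2 : m+1+(m+1)+1 = (m+m+1)+2 := by omega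
      constructor
      · rw [hidx, hevalrec (-(b/a)) (m+m), hzba, hzbc, ih.1, pow_succ]; ring
      · rw [hidx2, hevalrec (-(b/a)) (m+m+1), hzba, hzbc, ih.2, pow_succ]; ring
  -- key inequality from n ≥ nplus
  have key : 0 ≤ 2*t + (n:ℝ)*L := by
    rw [hnplus, div_le_iff₀ hh] at hn
    nlinarith [hn]
  rcases Nat.even_or_odd n with he | ho
  · -- even case
    obtain ⟨m, hm⟩ := id he
    rcases Nat.eq_zero_or_pos n with hn0 | hnpos
    · exfalso; rw [hn0] at key; push_cast at key; linarith
    have htn : 0 < t^n := he.pow_pos (ne_of_lt ht0)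
    have he2 : (W n).eval xdp ≤ 0 := by
      nlinarith [hWx n, mul_nonneg key htn.le]
    have hfar : ∀ᶠ x in atBot, 0 < eval x (W n) := by
      obtain ⟨j, hj⟩ : ∃ j, n = j+1 := ⟨n-1, by omega⟩
      rw [hj]
      exact hbot j (hj ▸ he)
    rcases lt_or_eq_of_le he2 with hlt | heq
    · -- strictly negative at xdp
      have hz : 0 < (W n).eval 0 := by rw [hm]; exact hzeven m
      obtain ⟨r2, hr2a, -, hr2root⟩ := ivt_root hxneg hlt hz
      obtain ⟨u0, hu0pos, hu0lt⟩ := (hfar.and (eventually_lt_atBot xdp)).exists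
      obtain ⟨r1, -, hr1b, hr1root⟩ := ivt_root' hu0lt hu0pos hlt
      exact ⟨r1, r2, by intro hh'; rw [hh'] at hr1b; linarith, hr1root, hr2root⟩
    · -- zero at xdp : use derivative
      have heq' : (W n).eval xdp = 0 := heq
      have hroot0 : (W n).IsRoot xdp := heq'
      have hnL0 : (n:ℝ)*L = -(2*t) := by
        have hx := hWx n
        rw [heq'] at hx
        have hx0 : (2*t + (n:ℝ)*L)*t^n = 0 := by linarith [hx]
        have h20 : (2*t + (n:ℝ)*L) = 0 := by
          rcases mul_eq_zero.mp hx0 with h | h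
          · exact h
          · exact absurd h (ne_of_gt htn)
        linarith
      have hat' := hat
      rw [htdef] at hat'
      have hbid : (c - s)*(-(2*t) - L) - 4*t^2 = 2*(-t)*b := by
        rw [htdef, hLdef]
        linear_combination (-2*xdp) * hat'
      have hbineq : 4*t^2 < (c - s)*(-(2*t) - L) := by
        nlinarith [mul_pos (neg_pos.mpr ht0) hb]
      have hG := key_ineq s t L c (n:ℝ) ht0 hh hs0 hsc hbineq hnL0
      have hDpos : 0 < (derivative (W n)).eval xdp := by
        have hnr : 0 < (n:ℝ) := by exact_mod_cast hnpos
        have ht3 : t^3 < 0 := Odd.pow_neg ⟨1, rfl⟩ ht0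
        have hRHS : (n:ℝ)*((12*t^2 - 6*t*s + 3*L*c - L*s) + (6*t*s - 3*L*c)*(n:ℝ)
            + (L*s)*(n:ℝ)^2)*t^n < 0 :=
          mul_neg_of_neg_of_pos (mul_neg_of_pos_of_neg hnr hG) htn
        have h2 : 12*t^3*((derivative (W n)).eval xdp) < 0 := by
          rw [hDx n]; exact hRHS
        by_contra hcon
        push_neg at hcon
        have hA0 : 0 ≤ -(12*t^3) :=
          neg_nonneg.mpr (mul_nonpos_of_nonneg_of_nonpos (by norm_num) ht3.le)
        have hB0 : 0 ≤ -((derivative (W n)).eval xdp) := neg_nonneg.mpr hcon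
        have hAB := mul_nonneg hA0 hB0
        rw [neg_mul_neg] at hAB
        exact absurd hAB (not_le.mpr h2)
      obtain ⟨y, hy1, hy2⟩ := neg_left_of_deriv_pos (W n) xdp heq' hDpos
      obtain ⟨u0, hu0pos, hu0lt⟩ := (hfar.and (eventually_lt_atBot y)).exists
      obtain ⟨r1, -, hr1b, hr1root⟩ := ivt_root' hu0lt hu0pos hy2
      exact ⟨r1, xdp, by intro hh'; rw [hh'] at hr1b; linarith, hr1root, hroot0⟩
  · -- odd case
    obtain ⟨m, hm⟩ := id ho
    have htn : t^n < 0 := ho.pow_neg ht0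
    have he2 : 0 ≤ (W n).eval xdp := by
      nlinarith [hWx n, mul_nonneg key (neg_nonneg.mpr htn.le)]
    have hban : (W n).eval (-(b/a)) = -(b/a) * K^m := by
      have hidx : n = m+m+1 := by omega
      rw [hidx]
      exact (hba2 m).2
    have hbaneg : (W n).eval (-(b/a)) < 0 := by
      rw [hban]
      have hKm := pow_pos hK m
      have hba0 : 0 < b/a := div_pos hb ha
      nlinarith
    obtain ⟨r1, hr1lt, hr1root⟩ : ∃ r, r < -(b/a) ∧ (W n).IsRoot r := by
      rcases eq_or_lt_of_le he2 with heq | hpos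
      · exact ⟨xdp, hba, heq.symm⟩
      · obtain ⟨r, -, hrb, hroot⟩ := ivt_root' hba hpos hbaneg
        exact ⟨r, hrb, hroot⟩
    have htopn : Tendsto (fun x => eval x (W n)) atTop atTop := by
      obtain ⟨j, hj⟩ : ∃ j, n = j+1 := ⟨n-1, by omega⟩
      rw [hj]
      exact htop j
    obtain ⟨v, hv1, hv2⟩ :=
      ((htopn.eventually_gt_atTop 0).and (eventually_gt_atTop (-(b/a)))).exists
    obtain ⟨r2, hr2a, -, hr2root⟩ := ivt_root hv2 hbaneg hv1
    exact ⟨r1, r2, by intro hh'; rw [hh'] at hr1lt; linarith, hr1root, hr2root⟩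
end

section
/- Suppose ad > bc, Δ_Δ ≥ 0, and h(x_Δ^+) < 0 < h(x_Δ^−). Then for every integer n with n > n^−, the polynomial W_n has at least one real root; if in addition Δ_g ≥ 0, then W_n has at least two distinct real roots. -/
/-!
At a root `x` of `Δ` the characteristic equation `t² = A(x) t + (c x + d)` of the recurrence has the
double root `A(x)/2`, so `2ⁿ W_n(x) = (A(x) + n h(x)) A(x)ⁿ⁻¹`; at a root `z` of
`g(z) = (a - 1) z² + (b + c) z + d` it has the root `z`, so `W_n(z) = zⁿ`; and `W_n(0) > 0` for `n ≥ 2`.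
The hypotheses force `x_Δ^- < x_Δ^+ < 0`, `a > 2` and `A(x_Δ^±) < 0`, and `n > n^-` makes
`A + n h` positive at `x_Δ^-`, while it is always negative at `x_Δ^+`. For odd `n`, `W_n` is then
positive at `x_Δ^-`, negative at `x_Δ^+` and positive at `0`. For even `n` it is negative at `x_Δ^-`
and positive at `0`; since `4 g = Δ - h²` is negative at `x_Δ^-`, `g` has a root `z < x_Δ^-`, where
`W_n(z) = zⁿ > 0`. The intermediate value theorem gives the roots.
-/

open Polynomial

section LinearRecurrence

variable {u : ℕ → ℝ} {p q : ℝ}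

theorem eq_pow_of_linearRec (hu : ∀ n, u (n + 2) = p * u (n + 1) + q * u n) {t : ℝ}
    (ht : t ^ 2 = p * t + q) (h0 : u 0 = 1) (h1 : u 1 = t) (n : ℕ) : u n = t ^ n := by
  induction n using Nat.twoStepInduction with
  | zero => simpa using h0
  | one => simpa using h1
  | more n ih ih' => rw [hu, ih, ih']; linear_combination -t ^ n * ht

theorem two_pow_mul_eq_of_linearRec_of_discrim_eq_zero
    (hu : ∀ n, u (n + 2) = p * u (n + 1) + q * u n) (hpq : p ^ 2 + 4 * q = 0) (n : ℕ) :
    2 ^ (n + 1) * u (n + 1) = (p * u 0 + (n + 1) * (2 * u 1 - p * u 0)) * p ^ n := by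
  induction n using Nat.twoStepInduction with
  | zero => ring
  | one => rw [hu]; linear_combination u 0 * hpq
  | more n ih ih' =>
    rw [hu]; push_cast at ih' ⊢
    linear_combination 2 * p * ih' + 4 * q * ih
      + (p * u 0 + (n + 1) * (2 * u 1 - p * u 0)) * p ^ n * hpq

theorem pos_of_linearRec (hu : ∀ n, u (n + 2) = p * u (n + 1) + q * u n) (hp : 0 < p)
    (hq : 0 < q) (h0 : 0 < u 0) (h1 : 0 ≤ u 1) (n : ℕ) : 0 < u (n + 2) := by
  have key : ∀ n, 0 ≤ u (n + 1) ∧ 0 < u (n + 2) := by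
    intro n
    induction n with
    | zero => exact ⟨h1, by rw [hu]; positivity⟩
    | succ n ih => exact ⟨ih.2.le, by rw [hu]; nlinarith [ih.1, ih.2]⟩
  exact (key n).2

end LinearRecurrence

theorem exists_lt_quadratic_eq_zero {α β γ x : ℝ} (hα : 0 < α)
    (hx : α * x ^ 2 + β * x + γ < 0) : ∃ z < x, α * z ^ 2 + β * z + γ = 0 := by
  have hD : (2 * α * x + β) ^ 2 < β ^ 2 - 4 * α * γ := by nlinarith
  set r := √(β ^ 2 - 4 * α * γ)
  have hr : r ^ 2 = β ^ 2 - 4 * α * γ := Real.sq_sqrt (by nlinarith)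
  have hlt := (abs_lt_of_sq_lt_sq' (hr ▸ hD) (Real.sqrt_nonneg _)).1
  refine ⟨(-β - r) / (2 * α), by rw [div_lt_iff₀ (by positivity)]; linarith, ?_⟩
  field_simp
  linear_combination hr

theorem discrim_eq_zero_of_mul_eq {a b c d σ x : ℝ} (ha : a ≠ 0)
    (hσ : σ ^ 2 = -a ^ 2 * d + a * b * c + c ^ 2) (hx : a ^ 2 * x = -(a * b) - 2 * c + 2 * σ) :
    (a * x + b) ^ 2 + 4 * (c * x + d) = 0 := by
  have h : a ^ 2 * ((a * x + b) ^ 2 + 4 * (c * x + d)) = 0 := by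
    linear_combination (a ^ 2 * x + a * b + 2 * c + 2 * σ) * hx + 4 * hσ
  simpa [ha] using h

theorem mul_add_neg_of_mul_eq {a b c σ x : ℝ} (ha : 0 < a) (hσ : σ < c)
    (hx : a ^ 2 * x = -(a * b) - 2 * c + 2 * σ) : a * x + b < 0 := by
  have h : a * (a * (a * x + b)) = a * (2 * (σ - c)) := by linear_combination a * hx
  nlinarith

namespace Polynomial

theorem exists_isRoot_mem_Ioo_of_neg_of_pos {P : ℝ[X]} {u v : ℝ} (huv : u < v)
    (hu : P.eval u < 0) (hv : 0 < P.eval v) : ∃ x ∈ Set.Ioo u v, P.IsRoot x :=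
  intermediate_value_Ioo huv.le P.continuous.continuousOn ⟨hu, hv⟩

theorem exists_isRoot_mem_Ioo_of_pos_of_neg {P : ℝ[X]} {u v : ℝ} (huv : u < v)
    (hu : 0 < P.eval u) (hv : P.eval v < 0) : ∃ x ∈ Set.Ioo u v, P.IsRoot x :=
  intermediate_value_Ioo' huv.le P.continuous.continuousOn ⟨hv, hu⟩

theorem exists_ne_isRoot_of_pos_neg_pos {P : ℝ[X]} {u v w : ℝ} (huv : u < v) (hvw : v < w)
    (hu : 0 < P.eval u) (hv : P.eval v < 0) (hw : 0 < P.eval w) :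
    ∃ x y, x ≠ y ∧ P.IsRoot x ∧ P.IsRoot y := by
  obtain ⟨x, hx, hPx⟩ := exists_isRoot_mem_Ioo_of_pos_of_neg huv hu hv
  obtain ⟨y, hy, hPy⟩ := exists_isRoot_mem_Ioo_of_neg_of_pos hvw hv hw
  exact ⟨x, y, (hx.2.trans hy.1).ne, hPx, hPy⟩

end Polynomial

section Recurrence

variable {a b c d : ℝ} {W : ℕ → ℝ[X]}

theorem eval_W_add_two
    (hW : ∀ n : ℕ, W (n + 2) = (C a * X + C b) * W (n + 1) + (C c * X + C d) * W n)
    (x : ℝ) (n : ℕ) :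
    (W (n + 2)).eval x = (a * x + b) * (W (n + 1)).eval x + (c * x + d) * (W n).eval x := by
  simp only [hW, eval_add, eval_mul, eval_C, eval_X]

theorem eval_W_eq_pow (hW0 : W 0 = 1) (hW1 : W 1 = X)
    (hW : ∀ n : ℕ, W (n + 2) = (C a * X + C b) * W (n + 1) + (C c * X + C d) * W n)
    {z : ℝ} (hz : (a - 1) * z ^ 2 + (b + c) * z + d = 0) (n : ℕ) : (W n).eval z = z ^ n :=
  eq_pow_of_linearRec (u := fun n ↦ (W n).eval z) (eval_W_add_two hW z) (by linear_combination -hz)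
    (by simp [hW0]) (by simp [hW1]) n

theorem eval_W_of_discrim_eq_zero (hW0 : W 0 = 1) (hW1 : W 1 = X)
    (hW : ∀ n : ℕ, W (n + 2) = (C a * X + C b) * W (n + 1) + (C c * X + C d) * W n)
    {x : ℝ} (hx : (a * x + b) ^ 2 + 4 * (c * x + d) = 0) (n : ℕ) :
    (W (n + 1)).eval x
      = ((a * x + b) + (n + 1) * ((2 - a) * x - b)) * (a * x + b) ^ n / 2 ^ (n + 1) := by
  have h := two_pow_mul_eq_of_linearRec_of_discrim_eq_zero (u := fun n ↦ (W n).eval x)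
    (eval_W_add_two hW x) hx n
  simp only [hW0, hW1, eval_one, eval_X] at h
  rw [eq_div_iff (by positivity)]
  linear_combination h

theorem eval_W_zero_pos (hb : 0 < b) (hd : 0 < d) (hW0 : W 0 = 1) (hW1 : W 1 = X)
    (hW : ∀ n : ℕ, W (n + 2) = (C a * X + C b) * W (n + 1) + (C c * X + C d) * W n) (n : ℕ) :
    0 < (W (n + 2)).eval 0 :=
  pos_of_linearRec (u := fun n ↦ (W n).eval 0) (fun n ↦ by simpa using eval_W_add_two hW 0 n) hb hd
    (by simp [hW0]) (by simp [hW1]) n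

theorem exists_eval_W_neg_of_discrim_eq_zero (hW0 : W 0 = 1) (hW1 : W 1 = X)
    (hW : ∀ n : ℕ, W (n + 2) = (C a * X + C b) * W (n + 1) + (C c * X + C d) * W n)
    {x y : ℝ} (hxy : x < y) (hy0 : y < 0)
    (hΔx : (a * x + b) ^ 2 + 4 * (c * x + d) = 0) (hΔy : (a * y + b) ^ 2 + 4 * (c * y + d) = 0)
    (hAx : a * x + b < 0) (hAy : a * y + b < 0)
    (hhx : 0 < (2 - a) * x - b) (hhy : (2 - a) * y - b < 0) {m : ℕ}
    (hfx : 0 < (a * x + b) + (m + 1) * ((2 - a) * x - b)) :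
    ∃ v < 0, (W (m + 1)).eval v < 0 ∧ ∃ u < v, 0 < (W (m + 1)).eval u := by
  have hfy : (a * y + b) + (m + 1) * ((2 - a) * y - b) < 0 := by nlinarith
  have hWx := eval_W_of_discrim_eq_zero hW0 hW1 hW hΔx m
  have hWy := eval_W_of_discrim_eq_zero hW0 hW1 hW hΔy m
  rcases Nat.even_or_odd m with hm | hm
  · refine ⟨y, hy0, ?_, x, hxy, ?_⟩
    · rw [hWy]
      exact div_neg_of_neg_of_pos (mul_neg_of_neg_of_pos hfy (hm.pow_pos hAy.ne)) (by positivity)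
    · rw [hWx]
      exact div_pos (mul_pos hfx (hm.pow_pos hAx.ne)) (by positivity)
  · -- `4 g(x) = Δ(x) - h(x)² < 0` for `g(z) = (a - 1) z² + (b + c) z + d`
    have hgx : (a - 1) * x ^ 2 + (b + c) * x + d < 0 := by nlinarith [mul_pos hhx hhx]
    obtain ⟨z, hz, hgz⟩ := exists_lt_quadratic_eq_zero (by nlinarith) hgx
    refine ⟨x, hxy.trans hy0, ?_, z, hz, ?_⟩
    · rw [hWx]
      exact div_neg_of_neg_of_pos (mul_neg_of_pos_of_neg hfx (hm.pow_neg hAx)) (by positivity)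
    · rw [eval_W_eq_pow hW0 hW1 hW hgz]
      exact hm.add_one.pow_pos (by linarith)

end Recurrence

theorem stmt_19_general (a b c d : ℝ) (ha : 0 < a) (hb : 0 < b) (hc : 0 < c) (hd : 0 < d)
    (W : ℕ → Polynomial ℝ)
    (hW0 : W 0 = 1) (hW1 : W 1 = X)
    (hW : ∀ n : ℕ, W (n + 2) = (C a * X + C b) * W (n + 1) + (C c * X + C d) * W n)
    (DD Dg : ℝ)
    (hDD : DD = -a ^ 2 * d + a * b * c + c ^ 2)
    (xdm xdp : ℝ)
    (hxdm : xdm = (-(a * b) - 2 * c - 2 * Real.sqrt DD) / a ^ 2)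
    (hxdp : xdp = (-(a * b) - 2 * c + 2 * Real.sqrt DD) / a ^ 2)
    (nminus : ℝ) (hnminus : nminus = -(a * xdm + b) / ((2 - a) * xdm - b))
    (had : b * c < a * d) (hDD0 : 0 ≤ DD)
    (hhp : (2 - a) * xdp - b < 0) (hhm : 0 < (2 - a) * xdm - b) :
    ∀ n : ℕ, nminus < (n : ℝ) →
      (∃ x : ℝ, (W n).IsRoot x) ∧
      (0 ≤ Dg → ∃ x y : ℝ, x ≠ y ∧ (W n).IsRoot x ∧ (W n).IsRoot y) := by
  intro n hn
  have hs := Real.sq_sqrt hDD0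
  have hs0 := Real.sqrt_nonneg DD
  have hxm : a ^ 2 * xdm = -(a * b) - 2 * c + 2 * -√DD := by rw [hxdm]; field_simp; ring
  have hxp : a ^ 2 * xdp = -(a * b) - 2 * c + 2 * √DD := by rw [hxdp]; field_simp
  have hAm := mul_add_neg_of_mul_eq ha (by linarith) hxm
  have hAp := mul_add_neg_of_mul_eq ha (by nlinarith) hxp
  have hn2 : 2 ≤ n := by
    have : 1 < nminus := by rw [hnminus, lt_div_iff₀ hhm]; nlinarith
    exact_mod_cast (show (1 : ℝ) < n by linarith)
  obtain ⟨k, rfl⟩ : ∃ k, n = k + 2 := ⟨n - 2, by omega⟩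
  have hfacm : 0 < (a * xdm + b) + ((k + 1 : ℕ) + 1) * ((2 - a) * xdm - b) := by
    rw [hnminus, div_lt_iff₀ hhm] at hn; push_cast at hn ⊢; linarith
  obtain ⟨v, hv0, hv, u, huv, hu⟩ := exists_eval_W_neg_of_discrim_eq_zero hW0 hW1 hW
    (by nlinarith) (by nlinarith) (discrim_eq_zero_of_mul_eq ha.ne' (by rw [neg_sq, hs, hDD]) hxm)
    (discrim_eq_zero_of_mul_eq ha.ne' (by rw [hs, hDD]) hxp) hAm hAp hhm hhp hfacm
  have h0 := eval_W_zero_pos hb hd hW0 hW1 hW k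
  obtain ⟨x, -, hx⟩ := exists_isRoot_mem_Ioo_of_neg_of_pos hv0 hv h0
  exact ⟨⟨x, hx⟩, fun _ ↦ exists_ne_isRoot_of_pos_neg_pos huv hv0 hu hv h0⟩

/-- If `a*d > b*c`, `ΔΔ ≥ 0` and `h(xΔ⁺) < 0 < h(xΔ⁻)`, then for every `n > n⁻`
the polynomial `W n` has at least one real root; if moreover `Δg ≥ 0`, then
`W n` has at least two distinct real roots. -/
theorem stmt_19 (a b c d : ℝ) (ha : 0 < a) (hb : 0 < b) (hc : 0 < c) (hd : 0 < d)
    (W : ℕ → Polynomial ℝ)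
    (hW0 : W 0 = 1) (hW1 : W 1 = X)
    (hW : ∀ n : ℕ, W (n + 2) = (C a * X + C b) * W (n + 1) + (C c * X + C d) * W n)
    (DD Dg : ℝ)
    (hDD : DD = -a ^ 2 * d + a * b * c + c ^ 2)
    (hDg : Dg = (b + c) ^ 2 + 4 * d * (1 - a))
    (xdm xdp : ℝ)
    (hxdm : xdm = (-(a * b) - 2 * c - 2 * Real.sqrt DD) / a ^ 2)
    (hxdp : xdp = (-(a * b) - 2 * c + 2 * Real.sqrt DD) / a ^ 2)
    (nminus : ℝ) (hnminus : nminus = -(a * xdm + b) / ((2 - a) * xdm - b))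
    (had : b * c < a * d) (hDD0 : 0 ≤ DD)
    (hhp : (2 - a) * xdp - b < 0) (hhm : 0 < (2 - a) * xdm - b) :
    ∀ n : ℕ, nminus < (n : ℝ) →
      (∃ x : ℝ, (W n).IsRoot x) ∧
      (0 ≤ Dg → ∃ x y : ℝ, x ≠ y ∧ (W n).IsRoot x ∧ (W n).IsRoot y) :=
  stmt_19_general a b c d ha hb hc hd W hW0 hW1 hW DD Dg hDD xdm xdp hxdm hxdp nminus hnminus had
    hDD0 hhp hhm
end
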